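/- Let T be a recursive tree (a computable, prefix-closed set of finite sequences of naturals). Assume D and ⋆ are closed λ-terms with the properties listed in the context, and let B₀, B₁ be the closed terms built from them as in the context. Then for every list s of naturals, if the subtree T(s) is well-founded, then B₀ ⌜s⌝̲ =ω B₁ ⌜s⌝̲ holds in the theory Hω. -/

import Mathlib

/-- Untyped λ-terms in de Bruijn representation. -/
inductive Lam : Type
  | var : ℕ → Lam
  | app : Lam → Lam → Lam
  | lam : Lam → Lam
deriving DecidableEq

namespace Lam

/-- Lift (shift) the free variables ≥ d by one. -/
def lift : ℕ → Lam → Lam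
  | d, var n => if n < d then var n else var (n + 1)
  | d, app M N => app (lift d M) (lift d N)
  | d, lam M => lam (lift (d + 1) M)

/-- Capture-avoiding substitution of N for the free variable k. -/
def subst : ℕ → Lam → Lam → Lam
  | k, N, var n => if n = k then N else if k < n then var (n - 1) else var n
  | k, N, app A B => app (subst k N A) (subst k N B)
  | k, N, lam M => lam (subst (k + 1) (lift 0 N) M)

/-- All free variables are < k. -/
def ClosedUnder : ℕ → Lam → Prop
  | k, var n => n < k
  | k, app A B => ClosedUnder k A ∧ ClosedUnder k B
  | k, lam M => ClosedUnder (k + 1) M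

/-- A term is closed if it has no free variables. -/
def Closed (M : Lam) : Prop := ClosedUnder 0 M

/-- x occurs free in the term. -/
def FreeIn : ℕ → Lam → Prop
  | x, var n => n = x
  | x, app A B => FreeIn x A ∨ FreeIn x B
  | x, lam M => FreeIn (x + 1) M

/-- The minimal number of abstractions needed to close the term. -/
def fvBound : Lam → ℕ
  | var n => n + 1
  | app A B => max (fvBound A) (fvBound B)
  | lam M => fvBound M - 1

/-- Iterated abstraction λz₁…zₙ.M. -/
def absN : ℕ → Lam → Lam
  | 0, M => M
  | n + 1, M => lam (absN n M)

/-- The λ-closure of a term: abstraction over all its free variables. -/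
def close (M : Lam) : Lam := absN (fvBound M) M

/-- One-step β-reduction (closed under arbitrary contexts). -/
inductive Beta : Lam → Lam → Prop
  | beta (U V) : Beta (app (lam U) V) (subst 0 V U)
  | appL {M M'} (N) : Beta M M' → Beta (app M N) (app M' N)
  | appR (M) {N N'} : Beta N N' → Beta (app M N) (app M N')
  | lam {M M'} : Beta M M' → Beta (lam M) (lam M')

/-- Many-step β-reduction. -/
def BetaStar : Lam → Lam → Prop := Relation.ReflTransGen Beta

/-- β-conversion. -/
def BetaConv : Lam → Lam → Prop := Relation.EqvGen Beta

def iComb : Lam := lam (var 0)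
def omegaComb : Lam := lam (app (var 0) (var 0))
def Omega : Lam := app omegaComb omegaComb
def Kstar : Lam := lam (lam (var 0))

/-- Apply a term to a list of arguments: M N₁ ⋯ Nₖ. -/
def appList : Lam → List Lam → Lam
  | M, [] => M
  | M, N :: Ns => appList (app M N) Ns

/-- A term is solvable iff its λ-closure applied to some closed terms β-converts to I. -/
def Solvable (M : Lam) : Prop :=
  ∃ Ns : List Lam, (∀ N ∈ Ns, Closed N) ∧ BetaConv (appList (close M) Ns) iComb

/-- One-step weak βΩ-reduction. -/
inductive WBO : Lam → Lam → Prop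
  | wbeta (U V) : Closed (app (lam U) V) → WBO (app (lam U) V) (subst 0 V U)
  | womega (M) : Closed M → ¬ Solvable M → M ≠ Omega → WBO M Omega
  | appL {M M'} (N) : WBO M M' → WBO (app M N) (app M' N)
  | appR (M) {N N'} : WBO N N' → WBO (app M N) (app M N')
  | lam {M M'} : WBO M M' → WBO (lam M) (lam M')

/-- Many-step weak βΩ-reduction. -/
def WBOStar : Lam → Lam → Prop := Relation.ReflTransGen WBO

/-- Weak βΩ-conversion. -/
def WBOConv : Lam → Lam → Prop := Relation.EqvGen WBO

/-- One-step full βΩ-reduction (Ω-contraction allowed on open terms,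
unsolvability referring to the λ-closure). -/
inductive BO : Lam → Lam → Prop
  | beta (U V) : BO (app (lam U) V) (subst 0 V U)
  | omega (M) : ¬ Solvable M → M ≠ Omega → BO M Omega
  | appL {M M'} (N) : BO M M' → BO (app M N) (app M' N)
  | appR (M) {N N'} : BO N N' → BO (app M N) (app M N')
  | lam {M M'} : BO M M' → BO (lam M) (lam M')

/-- Many-step full βΩ-reduction. -/
def BOStar : Lam → Lam → Prop := Relation.ReflTransGen BO

/-- Full βΩ-conversion. -/
def BOConv : Lam → Lam → Prop := Relation.EqvGen BO

/-- A term is in βΩ-normal form iff it admits no βΩ-reduction, i.e. it contains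
no β-redex and no unsolvable subterm other than Ω. -/
def BONormal (M : Lam) : Prop := ∀ N, ¬ BO M N

/-- Head weak β-reduction: contraction of the head redex
λx₁…xₙ.(λx.U)V M₁⋯Mₖ → λx₁…xₙ.([V/x]U)M₁⋯Mₖ with (λx.U)V closed. -/
inductive HeadWBeta : Lam → Lam → Prop
  | head (U V) : Closed (app (lam U) V) → HeadWBeta (app (lam U) V) (subst 0 V U)
  | app {M M'} (N) : (∀ U, M ≠ lam U) → HeadWBeta M M' → HeadWBeta (app M N) (app M' N)
  | lam {M M'} : HeadWBeta M M' → HeadWBeta (lam M) (lam M')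

/-- The head variable of the term is the free variable x,
i.e. the term has the form λy₁…yᵣ. x X₁ ⋯ Xₘ. -/
inductive HeadVar : ℕ → Lam → Prop
  | var (x) : HeadVar x (var x)
  | app {x M} (N) : (∀ U, M ≠ lam U) → HeadVar x M → HeadVar x (app M N)
  | lam {x M} : HeadVar (x + 1) M → HeadVar x (lam M)

/-- Subterm relation. -/
inductive Subterm : Lam → Lam → Prop
  | refl (M) : Subterm M M
  | appL {S M} (N) : Subterm S M → Subterm S (app M N)
  | appR (M) {S N} : Subterm S N → Subterm S (app M N)
  | lam {S M} : Subterm S M → Subterm S (lam M)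

/-- A closed term is in weak βΩ head normal form iff it is unsolvable and equal
to Ω, or solvable and without a head weak β-redex. -/
def WHnf (M : Lam) : Prop :=
  (¬ Solvable M ∧ M = Omega) ∨ (Solvable M ∧ ∀ N, ¬ HeadWBeta M N)

/-- Equality in the theory Hω. -/
inductive HOmega : Lam → Lam → Prop
  | refl (M) : Closed M → HOmega M M
  | wbetaL (U N) : Closed (app (lam U) N) → HOmega (app (lam U) N) (subst 0 N U)
  | wbetaR (U N) : Closed (app (lam U) N) → HOmega (subst 0 N U) (app (lam U) N)
  | unsolvL (M) : Closed M → ¬ Solvable M → HOmega M Omega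
  | unsolvR (M) : Closed M → ¬ Solvable M → HOmega Omega M
  | leibnitz (X Y M N) : ClosedUnder 1 X → ClosedUnder 1 Y → Closed M → Closed N →
      HOmega (subst 0 M X) (subst 0 M Y) → HOmega M N →
      HOmega (subst 0 N X) (subst 0 N Y)
  | omega_rule (P Q) : Closed P → Closed Q →
      (∀ M, Closed M → HOmega (app P M) (app Q M)) → HOmega P Q

/-- The n-fold application fⁿ z in the Church numeral. -/
def churchBody : ℕ → Lam
  | 0 => var 0
  | n + 1 => app (var 1) (churchBody n)

/-- The n-th Church numeral. -/
def church (n : ℕ) : Lam := lam (lam (churchBody n))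


/-- λab. b (a a b), the half of Turing's fixed point combinator. -/
def thetaHalf : Lam := lam (lam (app (var 0) (app (app (var 1) (var 1)) (var 0))))

/-- Turing's fixed point combinator Θ ≡ (λab.b(aab))(λab.b(aab)). -/
def Theta : Lam := app thetaHalf thetaHalf

/-- Successor on Church numerals σ ≡ λnfz. f (n f z). -/
def sigma : Lam := lam (lam (lam (app (var 1) (app (app (var 2) (var 1)) (var 0)))))

/-- λu. u Ω. -/
def uOmega : Lam := lam (app (var 0) Omega)

/-- λaxf. [f x, x (λu.uΩ) y (a (σ x) f)], where [A,B] ≡ λz.zAB and the free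
variable y has de Bruijn index 0. -/
def pairG : Lam :=
  lam (lam (lam (lam (
    app (app (var 0) (app (var 1) (var 2)))
        (app (app (app (var 2) uOmega) (var 4))
             (app (app (var 3) (app sigma (var 2))) (var 1)))))))

/-- λz. w (x ⋆ z), under the binders λw λx λy (so w, x, z have de Bruijn
indices 3, 2, 0 in the body). -/
def lastArg (star : Lam) : Lam := lam (app (var 3) (app (app star (var 2)) (var 0)))

/-- Fᵢ ≡ λwxy. D x i̲ (λab.b(aab)) (λab.b(aab)) (λaxf.[fx, x(λu.uΩ)y(a(σx)f)]) 0̲ (λz. w(x ⋆ z)). -/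
def Fterm (D star : Lam) (i : ℕ) : Lam :=
  lam (lam (lam
    (app (app (app (app (app (app (app D (var 1)) (church i)) thetaHalf) thetaHalf)
      pairG) (church 0)) (lastArg star))))

/-- Bᵢ ≡ Θ Fᵢ. -/
def Bterm (D star : Lam) (i : ℕ) : Lam := app Theta (Fterm D star i)

/-! ### Auxiliary development -/

set_option maxHeartbeats 1000000

attribute [simp] lift subst

theorem closedUnder_mono {k j : ℕ} {M : Lam} (h : ClosedUnder k M) (hkj : k ≤ j) :
    ClosedUnder j M := by
  induction M generalizing k j with
  | var n => simp only [ClosedUnder] at *; omega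
  | app A B ihA ihB => exact ⟨ihA h.1 hkj, ihB h.2 hkj⟩
  | lam M ih => exact ih h (by omega)

theorem lift_of_closedUnder {c d : ℕ} {M : Lam} (h : ClosedUnder c M) (hcd : c ≤ d) :
    lift d M = M := by
  induction M generalizing c d with
  | var n => simp only [ClosedUnder] at h; simp only [lift]; rw [if_pos (by omega)]
  | app A B ihA ihB => simp [ihA h.1 hcd, ihB h.2 hcd]
  | lam M ih => simp only [lift]; rw [ih (c := c + 1) h (by omega)]

theorem lift_closed {d : ℕ} {M : Lam} (h : Closed M) : lift d M = M :=
  lift_of_closedUnder h (Nat.zero_le d)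

theorem subst_of_closedUnder {c k : ℕ} {N M : Lam} (h : ClosedUnder c M) (hck : c ≤ k) :
    subst k N M = M := by
  induction M generalizing c k N with
  | var n => simp only [ClosedUnder] at h; simp only [subst]
             rw [if_neg (by omega), if_neg (by omega)]
  | app A B ihA ihB => simp [ihA h.1 hck, ihB h.2 hck]
  | lam M ih => simp only [subst]; rw [ih (c := c + 1) h (by omega)]

theorem subst_closed {k : ℕ} {N M : Lam} (h : Closed M) : subst k N M = M :=
  subst_of_closedUnder h (Nat.zero_le k)

theorem closedUnder_lift {k c : ℕ} {M : Lam} (h : ClosedUnder k M) (hck : c ≤ k) :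
    ClosedUnder (k + 1) (lift c M) := by
  induction M generalizing k c with
  | var n => simp only [lift]; split_ifs <;> simp only [ClosedUnder] at * <;> omega
  | app A B ihA ihB => exact ⟨ihA h.1 hck, ihB h.2 hck⟩
  | lam M ih => exact ih h (by omega)

theorem closedUnder_subst {k j : ℕ} {N M : Lam} (hM : ClosedUnder (k + 1) M)
    (hN : ClosedUnder k N) (hjk : j ≤ k) : ClosedUnder k (subst j N M) := by
  induction M generalizing k j N with
  | var n => simp only [ClosedUnder] at hM
             simp only [subst]; split_ifs <;> first | exact hN | (simp only [ClosedUnder]; omega)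
  | app A B ihA ihB => exact ⟨ihA hM.1 hN hjk, ihB hM.2 hN hjk⟩
  | lam M ih => exact ih hM (closedUnder_lift hN (Nat.zero_le k)) (by omega)

theorem beta_closedUnder {M M' : Lam} (h : Beta M M') :
    ∀ {k : ℕ}, ClosedUnder k M → ClosedUnder k M' := by
  induction h with
  | beta U V => exact fun h => closedUnder_subst h.1 h.2 (Nat.zero_le _)
  | appL N _ ih => exact fun h => ⟨ih h.1, h.2⟩
  | appR M _ ih => exact fun h => ⟨h.1, ih h.2⟩
  | lam _ ih => exact fun h => ih h

theorem betaStar_closedUnder {M M' : Lam} (h : BetaStar M M') {k : ℕ}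
    (hM : ClosedUnder k M) : ClosedUnder k M' := by
  induction h with
  | refl => exact hM
  | tail _ hstep ih => exact beta_closedUnder hstep ih

theorem lift_lift {i j : ℕ} (M : Lam) (h : i ≤ j) :
    lift i (lift j M) = lift (j + 1) (lift i M) := by
  induction M generalizing i j with
  | var n => simp only [lift]; split_ifs <;> simp only [lift] <;>
             (try split_ifs) <;> first | rfl | (congr 1; omega) | omega
  | app A B ihA ihB => simp [ihA h, ihB h]
  | lam M ih => simp only [lift]; rw [ih (i := i + 1) (j := j + 1) (by omega)]

theorem subst_lift {k : ℕ} (N M : Lam) : subst k N (lift k M) = M := by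
  induction M generalizing k N with
  | var n => simp only [lift]
             by_cases hn : n < k
             · rw [if_pos hn]; simp only [subst]; rw [if_neg (by omega), if_neg (by omega)]
             · rw [if_neg hn]; simp only [subst]; rw [if_neg (by omega), if_pos (by omega)]
               norm_num
  | app A B ihA ihB => simp [ihA, ihB]
  | lam M ih => simp [ih]

theorem lift_subst {i j : ℕ} (N M : Lam) (h : i ≤ j) :
    lift j (subst i N M) = subst i (lift j N) (lift (j + 1) M) := by
  induction M generalizing i j N with
  | var n =>
      simp only [subst, lift]
      split_ifs <;> simp only [subst, lift] <;> (try split_ifs) <;>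
        first | rfl | (congr 1; omega) | omega
  | app A B ihA ihB => simp [ihA _ h, ihB _ h]
  | lam M ih => simp only [subst, lift]
                rw [ih (i := i + 1) (j := j + 1) _ (by omega), lift_lift N (Nat.zero_le j)]

theorem lift_subst' {i j : ℕ} (N M : Lam) (h : j ≤ i) :
    lift j (subst i N M) = subst (i + 1) (lift j N) (lift j M) := by
  induction M generalizing i j N with
  | var n =>
      simp only [subst, lift]
      split_ifs <;> simp only [subst, lift] <;> (try split_ifs) <;>
        first | rfl | (congr 1; omega) | omega
  | app A B ihA ihB => simp [ihA _ h, ihB _ h]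
  | lam M ih => simp only [subst, lift]
                rw [ih (i := i + 1) (j := j + 1) _ (by omega), lift_lift N (Nat.zero_le j)]

theorem subst_subst {i j : ℕ} (N V M : Lam) (h : i ≤ j) :
    subst j N (subst i V M) = subst i (subst j N V) (subst (j + 1) (lift i N) M) := by
  induction M generalizing i j N V with
  | var n =>
      simp only [subst]
      split_ifs <;> (try simp only [subst]) <;> (try split_ifs) <;>
        first | rfl | (exfalso; omega) | (congr 1; omega) | (rw [subst_lift])
  | app A B ihA ihB => simp [ihA _ _ h, ihB _ _ h]
  | lam M ih =>
      simp only [subst]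
      rw [ih (i := i + 1) (j := j + 1) _ _ (by omega),
        ← lift_subst' (i := j) (j := 0) N V (Nat.zero_le j), ← lift_lift N (Nat.zero_le i)]

/-! ### Decidability of closedness, close, appList -/

def closedUnderDec : (k : ℕ) → (M : Lam) → Decidable (ClosedUnder k M)
  | k, var n => inferInstanceAs (Decidable (n < k))
  | k, app A B =>
      @instDecidableAnd _ _ (closedUnderDec k A) (closedUnderDec k B)
  | k, lam M => closedUnderDec (k + 1) M

instance (k : ℕ) (M : Lam) : Decidable (ClosedUnder k M) := closedUnderDec k M
instance (M : Lam) : Decidable (Closed M) := closedUnderDec 0 M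

theorem closed_app {M N : Lam} (hM : Closed M) (hN : Closed N) : Closed (app M N) := by
  simp only [Closed, ClosedUnder]; exact ⟨hM, hN⟩

theorem closed_lam {M : Lam} (h : ClosedUnder 1 M) : Closed (lam M) := h

theorem fvBound_le {k : ℕ} {M : Lam} (h : ClosedUnder k M) : fvBound M ≤ k := by
  induction M generalizing k with
  | var n => simp only [ClosedUnder] at h; simp only [fvBound]; omega
  | app A B ihA ihB => simp only [fvBound]; exact max_le (ihA h.1) (ihB h.2)
  | lam M ih => simp only [fvBound]; have := ih (k := k + 1) h; omega

theorem close_of_closed {M : Lam} (h : Closed M) : close M = M := by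
  have : fvBound M = 0 := Nat.le_zero.mp (fvBound_le h)
  simp [close, this, absN]

theorem appList_append (M : Lam) (l₁ l₂ : List Lam) :
    appList M (l₁ ++ l₂) = appList (appList M l₁) l₂ := by
  induction l₁ generalizing M with
  | nil => rfl
  | cons A l ih => simp [appList, ih]

theorem appList_snoc (M : Lam) (l : List Lam) (A : Lam) :
    appList M (l ++ [A]) = app (appList M l) A := by
  rw [appList_append]; rfl

theorem closed_appList {M : Lam} {l : List Lam} (hM : Closed M)
    (hl : ∀ A ∈ l, Closed A) : Closed (appList M l) := by
  induction l generalizing M with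
  | nil => exact hM
  | cons A l ih =>
      exact ih (closed_app hM (hl A (by simp))) (fun B hB => hl B (by simp [hB]))

/-! ### BetaStar and BetaConv congruences -/

theorem BetaStar.appLc {M M' : Lam} (N : Lam) (h : BetaStar M M') :
    BetaStar (app M N) (app M' N) := by
  induction h with
  | refl => exact Relation.ReflTransGen.refl
  | tail _ hstep ih => exact ih.tail (Beta.appL N hstep)

theorem BetaStar.appRc (M : Lam) {N N' : Lam} (h : BetaStar N N') :
    BetaStar (app M N) (app M N') := by
  induction h with
  | refl => exact Relation.ReflTransGen.refl
  | tail _ hstep ih => exact ih.tail (Beta.appR M hstep)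

theorem BetaStar.lamc {M M' : Lam} (h : BetaStar M M') :
    BetaStar (lam M) (lam M') := by
  induction h with
  | refl => exact Relation.ReflTransGen.refl
  | tail _ hstep ih => exact ih.tail (Beta.lam hstep)

theorem BetaStar.appc {M M' N N' : Lam} (h1 : BetaStar M M') (h2 : BetaStar N N') :
    BetaStar (app M N) (app M' N') := (h1.appLc N).trans (BetaStar.appRc M' h2)

theorem betaStar_appList {M M' : Lam} (l : List Lam) (h : BetaStar M M') :
    BetaStar (appList M l) (appList M' l) := by
  induction l generalizing M M' with
  | nil => exact h
  | cons A l ih => exact ih (h.appLc A)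

theorem BetaConv.of_star {M N : Lam} (h : BetaStar M N) : BetaConv M N := by
  induction h with
  | refl => exact Relation.EqvGen.refl _
  | tail _ hstep ih => exact ih.trans _ _ _ (Relation.EqvGen.rel _ _ hstep)

theorem BetaConv.symmc {M N : Lam} (h : BetaConv M N) : BetaConv N M :=
  Relation.EqvGen.symm _ _ h

theorem BetaConv.transc {M N P : Lam} (h1 : BetaConv M N) (h2 : BetaConv N P) :
    BetaConv M P := Relation.EqvGen.trans _ _ _ h1 h2

theorem conv_appL {M M' : Lam} (N : Lam) (h : BetaConv M M') :
    BetaConv (app M N) (app M' N) := by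
  induction h with
  | rel _ _ hr => exact Relation.EqvGen.rel _ _ (Beta.appL N hr)
  | refl _ => exact Relation.EqvGen.refl _
  | symm _ _ _ ih => exact ih.symmc
  | trans _ _ _ _ _ ih1 ih2 => exact ih1.transc ih2

theorem conv_appR (M : Lam) {N N' : Lam} (h : BetaConv N N') :
    BetaConv (app M N) (app M N') := by
  induction h with
  | rel _ _ hr => exact Relation.EqvGen.rel _ _ (Beta.appR M hr)
  | refl _ => exact Relation.EqvGen.refl _
  | symm _ _ _ ih => exact ih.symmc
  | trans _ _ _ _ _ ih1 ih2 => exact ih1.transc ih2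

theorem conv_appList {M M' : Lam} (l : List Lam) (h : BetaConv M M') :
    BetaConv (appList M l) (appList M' l) := by
  induction l generalizing M M' with
  | nil => exact h
  | cons A l ih => exact ih (conv_appL A h)

/-! ### Solvability basics -/

theorem solvable_iff_closed {M : Lam} (h : Closed M) :
    Solvable M ↔ ∃ Ns : List Lam, (∀ N ∈ Ns, Closed N) ∧ BetaConv (appList M Ns) iComb := by
  unfold Solvable; rw [close_of_closed h]

theorem unsolvable_app {M N : Lam} (hM : Closed M) (hN : Closed N)
    (h : ¬ Solvable M) : ¬ Solvable (app M N) := by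
  intro hs
  rw [solvable_iff_closed (closed_app hM hN)] at hs
  obtain ⟨Ns, hNs, hconv⟩ := hs
  exact h ((solvable_iff_closed hM).mpr
    ⟨N :: Ns, fun B hB => by
      rcases List.mem_cons.mp hB with h' | h'
      · subst h'; exact hN
      · exact hNs _ h', hconv⟩)

theorem unsolvable_appList {M : Lam} (hM : Closed M) (h : ¬ Solvable M) :
    ∀ (l : List Lam), (∀ A ∈ l, Closed A) → ¬ Solvable (appList M l) := by
  intro l
  induction l generalizing M with
  | nil => exact fun _ => h
  | cons A l ih =>
      intro hl
      exact ih (M := app M A) (closed_app hM (hl A (by simp)))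
        (unsolvable_app hM (hl A (by simp)) h) (fun B hB => hl B (by simp [hB]))

theorem solvable_of_conv {M N : Lam} (hM : Closed M) (hN : Closed N)
    (hc : BetaConv M N) (h : Solvable M) : Solvable N := by
  rw [solvable_iff_closed hM] at h
  obtain ⟨Ns, hNs, hconv⟩ := h
  exact (solvable_iff_closed hN).mpr
    ⟨Ns, hNs, (conv_appList Ns hc.symmc).transc hconv⟩

theorem unsolvable_lam {C : Lam} (hC : ClosedUnder 1 C)
    (h : ∀ N, Closed N → ¬ Solvable (subst 0 N C)) : ¬ Solvable (lam C) := by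
  intro hs
  have hcl : Closed (lam C) := hC
  rw [solvable_iff_closed hcl] at hs
  obtain ⟨Ns, hNs, hconv⟩ := hs
  match Ns, hNs, hconv with
  | [], _, hconv =>
      -- lam C =β I, hence (subst 0 I C) is solvable
      have hIc : Closed iComb := by decide
      have hsub : Closed (subst 0 iComb C) := closedUnder_subst hC hIc le_rfl
      apply h iComb hIc
      rw [solvable_iff_closed hsub]
      refine ⟨[], by simp, ?_⟩
      have h1 : BetaConv (subst 0 iComb C) (app (lam C) iComb) :=
        BetaConv.symmc (Relation.EqvGen.rel _ _ (Beta.beta C iComb))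
      have h2 : BetaConv (app (lam C) iComb) (app iComb iComb) := conv_appL _ hconv
      have h3 : BetaConv (app iComb iComb) iComb := by
        have := Beta.beta (var 0) iComb
        simpa [subst, iComb, BetaConv] using Relation.EqvGen.rel _ _ this
      exact (h1.transc h2).transc h3
  | N :: Ns', hNs, hconv =>
      have hNc : Closed N := hNs N (by simp)
      have hsub : Closed (subst 0 N C) := closedUnder_subst hC hNc le_rfl
      apply h N hNc
      rw [solvable_iff_closed hsub]
      refine ⟨Ns', fun B hB => hNs B (by simp [hB]), ?_⟩
      refine BetaConv.transc ?_ hconv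
      exact BetaConv.symmc (conv_appList Ns' (Relation.EqvGen.rel _ _ (Beta.beta C N)))

/-! ### HOmega basic machinery -/

theorem homega_closed {M N : Lam} (h : HOmega M N) : Closed M ∧ Closed N := by
  induction h with
  | refl M hM => exact ⟨hM, hM⟩
  | wbetaL U N h => exact ⟨h, closedUnder_subst h.1 h.2 le_rfl⟩
  | wbetaR U N h => exact ⟨closedUnder_subst h.1 h.2 le_rfl, h⟩
  | unsolvL M hM _ => exact ⟨hM, by decide⟩
  | unsolvR M hM _ => exact ⟨by decide, hM⟩
  | leibnitz X Y M N hX hY hM hN _ _ _ _ =>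
      exact ⟨closedUnder_subst hX hN le_rfl, closedUnder_subst hY hN le_rfl⟩
  | omega_rule P Q hP hQ _ _ => exact ⟨hP, hQ⟩

theorem homega_symm {M N : Lam} (h : HOmega M N) : HOmega N M := by
  induction h with
  | refl M hM => exact HOmega.refl M hM
  | wbetaL U N h => exact HOmega.wbetaR U N h
  | wbetaR U N h => exact HOmega.wbetaL U N h
  | unsolvL M hM hs => exact HOmega.unsolvR M hM hs
  | unsolvR M hM hs => exact HOmega.unsolvL M hM hs
  | leibnitz X Y M N hX hY hM hN h1 h2 ih1 _ =>
      exact HOmega.leibnitz Y X M N hY hX hM hN ih1 h2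
  | omega_rule P Q hP hQ _ ih => exact HOmega.omega_rule Q P hQ hP (fun M hM => ih M hM)

theorem homega_trans {M N P : Lam} (h1 : HOmega M N) (h2 : HOmega N P) : HOmega M P := by
  have hM : Closed M := (homega_closed h1).1
  have hN : Closed N := (homega_closed h1).2
  have hP : Closed P := (homega_closed h2).2
  have key := HOmega.leibnitz (var 0) M N P (by decide)
    (closedUnder_mono hM (by omega)) hN hP ?_ h2
  · have e1 : subst 0 P (var 0) = P := by simp [subst]
    have e2 : subst 0 P M = M := subst_closed hM
    rw [e1, e2] at key
    exact homega_symm key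
  · have e1 : subst 0 N (var 0) = N := by simp [subst]
    have e2 : subst 0 N M = M := subst_closed hM
    rw [e1, e2]
    exact homega_symm h1

theorem homega_congr {X M N : Lam} (hX : ClosedUnder 1 X) (h : HOmega M N) :
    HOmega (subst 0 M X) (subst 0 N X) := by
  have hM : Closed M := (homega_closed h).1
  have hN : Closed N := (homega_closed h).2
  have hXM : Closed (subst 0 M X) := closedUnder_subst hX hM le_rfl
  have key := HOmega.leibnitz X (subst 0 M X) M N hX
    (closedUnder_mono hXM (by omega)) hM hN ?_ h
  · rw [subst_closed hXM] at key
    exact homega_symm key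
  · rw [subst_closed hXM]
    exact HOmega.refl _ hXM

theorem homega_appL {M N A : Lam} (h : HOmega M N) (hA : Closed A) :
    HOmega (app M A) (app N A) := by
  have key := homega_congr (X := app (var 0) A)
    ⟨by simp [ClosedUnder], closedUnder_mono hA (by omega)⟩ h
  simpa [subst, subst_closed hA] using key

theorem homega_appR {M A B : Lam} (hM : Closed M) (h : HOmega A B) :
    HOmega (app M A) (app M B) := by
  have key := homega_congr (X := app M (var 0))
    ⟨closedUnder_mono hM (by omega), by simp [ClosedUnder]⟩ h
  simpa [subst, subst_closed hM] using key

theorem homega_unsolv_pair {M N : Lam} (hM : Closed M) (hN : Closed N)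
    (h1 : ¬ Solvable M) (h2 : ¬ Solvable N) : HOmega M N :=
  homega_trans (HOmega.unsolvL M hM h1) (HOmega.unsolvR N hN h2)

/-! ### Simultaneous closing instantiation -/

def instAux (σ : ℕ → Lam) : ℕ → Lam → Lam
  | d, var n => if n < d then var n else σ (n - d)
  | d, app A B => app (instAux σ d A) (instAux σ d B)
  | d, lam M => lam (instAux σ (d + 1) M)

def ClosedSub (σ : ℕ → Lam) : Prop := ∀ n, Closed (σ n)

theorem instAux_closedUnder {σ : ℕ → Lam} (hσ : ClosedSub σ) (d : ℕ) (M : Lam) :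
    ClosedUnder d (instAux σ d M) := by
  induction M generalizing d with
  | var n =>
      simp only [instAux]; split_ifs with h
      · simpa [ClosedUnder] using h
      · exact closedUnder_mono (hσ _) (Nat.zero_le d)
  | app A B ihA ihB => exact ⟨ihA d, ihB d⟩
  | lam M ih => exact ih (d + 1)

theorem instAux_of_closedUnder {σ : ℕ → Lam} {d : ℕ} {M : Lam} (h : ClosedUnder d M) :
    instAux σ d M = M := by
  induction M generalizing d with
  | var n => simp only [ClosedUnder] at h; simp [instAux, h]
  | app A B ihA ihB => simp only [instAux]; rw [ihA h.1, ihB h.2]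
  | lam M ih => simp only [instAux]; rw [ih (d := d + 1) h]

theorem instAux_lift {σ : ℕ → Lam} (hσ : ClosedSub σ) {c d : ℕ} (M : Lam) (hcd : c ≤ d) :
    instAux σ (d + 1) (lift c M) = lift c (instAux σ d M) := by
  induction M generalizing c d with
  | var n =>
      simp only [lift, instAux]
      split_ifs <;> simp only [lift, instAux] <;> (try split_ifs) <;>
        first
        | rfl | (exfalso; omega) | (congr 1; omega)
        | (rw [lift_of_closedUnder (hσ _) (Nat.zero_le c)]; congr 1; omega)
  | app A B ihA ihB => simp only [lift, instAux]; rw [ihA hcd, ihB hcd]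
  | lam M ih => simp only [lift, instAux]; rw [ih (by omega)]

def scons (Z : Lam) (σ : ℕ → Lam) : ℕ → Lam
  | 0 => Z
  | n + 1 => σ n

theorem closedSub_scons {Z : Lam} {σ : ℕ → Lam} (hZ : Closed Z) (hσ : ClosedSub σ) :
    ClosedSub (scons Z σ) := fun n => by cases n <;> simp [scons, hZ, hσ _]

theorem instAux_scons {σ : ℕ → Lam} (hσ : ClosedSub σ) {Z : Lam} (hZ : Closed Z)
    (d : ℕ) (M : Lam) : subst d Z (instAux σ (d + 1) M) = instAux (scons Z σ) d M := by
  induction M generalizing d with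
  | var n =>
      by_cases h1 : n < d
      · simp only [instAux]
        rw [if_pos (show n < d + 1 by omega), if_pos h1]
        simp only [subst]; rw [if_neg (by omega), if_neg (by omega)]
      · by_cases h2 : n = d
        · subst h2
          simp only [instAux]
          rw [if_pos (show n < n + 1 by omega), if_neg h1]
          simp only [subst]
          rw [if_pos trivial, show n - n = 0 from by omega]
          rfl
        · simp only [instAux]
          rw [if_neg (show ¬ n < d + 1 by omega), if_neg h1]
          rw [subst_of_closedUnder (hσ _) (Nat.zero_le d)]
          rw [show n - d = (n - (d + 1)) + 1 from by omega]
          rfl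
  | app A B ihA ihB => simp only [instAux, subst]; rw [ihA, ihB]
  | lam M ih => simp only [instAux, subst]; rw [lift_of_closedUnder hZ (Nat.zero_le 0), ih]

theorem instAux_subst {σ : ℕ → Lam} (hσ : ClosedSub σ) (d : ℕ) (V M : Lam) :
    instAux σ d (subst d V M) = subst d (instAux σ d V) (instAux σ (d + 1) M) := by
  induction M generalizing d V with
  | var n =>
      simp only [subst, instAux]
      split_ifs <;> (try simp only [subst, instAux]) <;> (try split_ifs) <;>
        first
        | rfl | (exfalso; omega) | (congr 1; omega)
        | (rw [subst_of_closedUnder (hσ _) (Nat.zero_le d)]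
           first | rfl | (apply congrArg; omega))
  | app A B ihA ihB => simp only [subst, instAux]; rw [ihA, ihB]
  | lam M ih =>
      simp only [subst, instAux]
      rw [ih, instAux_lift hσ V (Nat.zero_le d)]

theorem beta_inst {M N : Lam} (h : Beta M N) :
    ∀ σ : ℕ → Lam, ClosedSub σ → HOmega (instAux σ 0 M) (instAux σ 0 N) := by
  induction h with
  | beta U V =>
      intro σ hσ
      have e : instAux σ 0 (subst 0 V U) =
          subst 0 (instAux σ 0 V) (instAux σ 1 U) := instAux_subst hσ 0 V U
      rw [e]
      have hcl : Closed (app (lam (instAux σ 1 U)) (instAux σ 0 V)) :=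
        closed_app (closed_lam (instAux_closedUnder hσ 1 U)) (instAux_closedUnder hσ 0 V)
      simpa [instAux] using HOmega.wbetaL (instAux σ 1 U) (instAux σ 0 V) hcl
  | appL N _ ih =>
      intro σ hσ
      simpa [instAux] using homega_appL (ih σ hσ) (instAux_closedUnder hσ 0 N)
  | appR M _ ih =>
      intro σ hσ
      simpa [instAux] using homega_appR (instAux_closedUnder hσ 0 M) (ih σ hσ)
  | lam hMM ih =>
      rename_i M M'
      intro σ hσ
      simp only [instAux]
      apply HOmega.omega_rule _ _ (closed_lam (instAux_closedUnder hσ 1 M))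
        (closed_lam (instAux_closedUnder hσ 1 M'))
      intro Z hZ
      have h1 : HOmega (app (lam (instAux σ 1 M)) Z) (subst 0 Z (instAux σ 1 M)) :=
        HOmega.wbetaL _ _ (closed_app (closed_lam (instAux_closedUnder hσ 1 M)) hZ)
      have h2 : HOmega (subst 0 Z (instAux σ 1 M')) (app (lam (instAux σ 1 M')) Z) :=
        HOmega.wbetaR _ _ (closed_app (closed_lam (instAux_closedUnder hσ 1 M')) hZ)
      rw [instAux_scons hσ hZ 0 M] at h1
      rw [instAux_scons hσ hZ 0 M'] at h2
      exact homega_trans h1 (homega_trans (ih _ (closedSub_scons hZ hσ)) h2)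

def omegaSub : ℕ → Lam := fun _ => Omega

theorem closedSub_omegaSub : ClosedSub omegaSub := fun _ => by
  show Closed Omega; decide

theorem homega_of_beta {M N : Lam} (hM : Closed M) (h : Beta M N) : HOmega M N := by
  have := beta_inst h omegaSub closedSub_omegaSub
  rwa [instAux_of_closedUnder hM, instAux_of_closedUnder (beta_closedUnder h hM)] at this

theorem homega_of_betaStar {M N : Lam} (hM : Closed M) (h : BetaStar M N) : HOmega M N := by
  induction h with
  | refl => exact HOmega.refl M hM
  | tail hst hstep ih =>
      exact homega_trans ih (homega_of_beta (betaStar_closedUnder hst hM) hstep)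

theorem conv_inst {M N : Lam} (h : BetaConv M N) :
    ∀ σ : ℕ → Lam, ClosedSub σ → HOmega (instAux σ 0 M) (instAux σ 0 N) := by
  induction h with
  | rel _ _ hr => exact beta_inst hr
  | refl _ => exact fun σ hσ => HOmega.refl _ (instAux_closedUnder hσ 0 _)
  | symm _ _ _ ih => exact fun σ hσ => homega_symm (ih σ hσ)
  | trans _ _ _ _ _ ih1 ih2 => exact fun σ hσ => homega_trans (ih1 σ hσ) (ih2 σ hσ)

theorem homega_of_conv {M N : Lam} (hM : Closed M) (hN : Closed N) (h : BetaConv M N) :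
    HOmega M N := by
  have := conv_inst h omegaSub closedSub_omegaSub
  rwa [instAux_of_closedUnder hM, instAux_of_closedUnder hN] at this

theorem homega_lam_ext {C₀ C₁ : Lam} (h0 : ClosedUnder 1 C₀) (h1 : ClosedUnder 1 C₁)
    (h : ∀ N, Closed N → HOmega (subst 0 N C₀) (subst 0 N C₁)) :
    HOmega (lam C₀) (lam C₁) := by
  apply HOmega.omega_rule _ _ (closed_lam h0) (closed_lam h1)
  intro N hN
  have e1 : HOmega (app (lam C₀) N) (subst 0 N C₀) :=
    HOmega.wbetaL _ _ (closed_app (closed_lam h0) hN)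
  have e2 : HOmega (subst 0 N C₁) (app (lam C₁) N) :=
    HOmega.wbetaR _ _ (closed_app (closed_lam h1) hN)
  exact homega_trans e1 (homega_trans (h N hN) e2)

/-! ### Parallel reduction and Church–Rosser -/

inductive Par : Lam → Lam → Prop
  | var (n) : Par (var n) (var n)
  | app {M M' N N'} : Par M M' → Par N N' → Par (app M N) (app M' N')
  | lam {M M'} : Par M M' → Par (lam M) (lam M')
  | beta {U U' V V'} : Par U U' → Par V V' → Par (app (lam U) V) (subst 0 V' U')

theorem Par.rfl : ∀ M : Lam, Par M M := by
  intro M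
  induction M with
  | var n => exact Par.var n
  | app A B ihA ihB => exact Par.app ihA ihB
  | lam M ih => exact Par.lam ih

theorem par_of_beta {M N : Lam} (h : Beta M N) : Par M N := by
  induction h with
  | beta U V => exact Par.beta (Par.rfl U) (Par.rfl V)
  | appL N _ ih => exact Par.app ih (Par.rfl N)
  | appR M _ ih => exact Par.app (Par.rfl M) ih
  | lam _ ih => exact Par.lam ih

theorem betaStar_of_par {M N : Lam} (h : Par M N) : BetaStar M N := by
  induction h with
  | var n => exact Relation.ReflTransGen.refl
  | app _ _ ih1 ih2 => exact BetaStar.appc ih1 ih2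
  | lam _ ih => exact BetaStar.lamc ih
  | beta _ _ ih1 ih2 =>
      rename_i U U' V V' _ _
      exact ((BetaStar.lamc ih1).appc ih2).tail (Beta.beta U' V')

theorem par_lift {M M' : Lam} (h : Par M M') (d : ℕ) : Par (lift d M) (lift d M') := by
  induction h generalizing d with
  | var n => exact Par.rfl _
  | app _ _ ih1 ih2 => exact Par.app (ih1 d) (ih2 d)
  | lam _ ih => exact Par.lam (ih (d + 1))
  | beta _ _ ih1 ih2 =>
      rename_i U U' V V' _ _
      simp only [lift]
      rw [lift_subst V' U' (Nat.zero_le d)]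
      exact Par.beta (ih1 (d + 1)) (ih2 d)

theorem par_subst {M M' N N' : Lam} (h : Par M M') (hN : Par N N') (k : ℕ) :
    Par (subst k N M) (subst k N' M') := by
  induction h generalizing k N N' with
  | var n =>
      simp only [subst]; split_ifs
      · exact hN
      · exact Par.rfl _
      · exact Par.rfl _
  | app _ _ ih1 ih2 => exact Par.app (ih1 hN k) (ih2 hN k)
  | lam _ ih => exact Par.lam (ih (par_lift hN 0) (k + 1))
  | beta _ _ ih1 ih2 =>
      rename_i U U' V V' _ _
      simp only [subst]
      rw [subst_subst N' V' U' (Nat.zero_le k)]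
      exact Par.beta (ih1 (par_lift hN 0) (k + 1)) (ih2 hN k)

def cd : Lam → Lam
  | var n => var n
  | lam M => lam (cd M)
  | app (var n) N => app (var n) (cd N)
  | app (app A B) N => app (cd (app A B)) (cd N)
  | app (lam U) V => subst 0 (cd V) (cd U)

theorem par_lam_inv {U X : Lam} (h : Par (lam U) X) : ∃ U', X = lam U' ∧ Par U U' := by
  cases h with
  | lam h => exact ⟨_, rfl, h⟩

theorem par_cd {M N : Lam} (h : Par M N) : Par N (cd M) := by
  induction h with
  | var n => exact Par.var n
  | lam _ ih => exact Par.lam ih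
  | @app P P' Q Q' h1 h2 ih1 ih2 =>
      cases P with
      | var n =>
          cases h1
          exact Par.app (Par.rfl _) ih2
      | app A B => exact Par.app ih1 ih2
      | lam U =>
          obtain ⟨U', rfl, hpU⟩ := par_lam_inv h1
          have hU' : Par U' (cd U) := by
            have h3 := ih1
            simp only [cd] at h3
            obtain ⟨U'', e, hp⟩ := par_lam_inv h3
            cases e
            exact hp
          exact Par.beta hU' ih2
  | beta _ _ ih1 ih2 =>
      simp only [cd]
      exact par_subst ih1 ih2 0

theorem par_diamond {M A B : Lam} (h1 : Par M A) (h2 : Par M B) :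
    ∃ C, Par A C ∧ Par B C := ⟨cd M, par_cd h1, par_cd h2⟩

def ParStar := Relation.ReflTransGen Par

theorem parStar_of_betaStar {M N : Lam} (h : BetaStar M N) : ParStar M N := by
  induction h with
  | refl => exact Relation.ReflTransGen.refl
  | tail _ hstep ih => exact ih.tail (par_of_beta hstep)

theorem betaStar_of_parStar {M N : Lam} (h : ParStar M N) : BetaStar M N := by
  induction h with
  | refl => exact Relation.ReflTransGen.refl
  | tail _ hstep ih => exact ih.trans (betaStar_of_par hstep)

theorem par_strip {M A B : Lam} (h1 : Par M A) (h2 : ParStar M B) :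
    ∃ C, ParStar A C ∧ Par B C := by
  induction h2 generalizing A with
  | refl => exact ⟨A, Relation.ReflTransGen.refl, h1⟩
  | tail _ hstep ih =>
      rename_i P Q _
      obtain ⟨C, hAC, hPC⟩ := ih h1
      obtain ⟨E, hCE, hQE⟩ := par_diamond hPC hstep
      exact ⟨E, hAC.tail hCE, hQE⟩

theorem parStar_confluent {M A B : Lam} (h1 : ParStar M A) (h2 : ParStar M B) :
    ∃ C, ParStar A C ∧ ParStar B C := by
  induction h1 generalizing B with
  | refl => exact ⟨B, h2, Relation.ReflTransGen.refl⟩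
  | tail _ hstep ih =>
      rename_i P Q _
      obtain ⟨C, hPC, hBC⟩ := ih h2
      obtain ⟨E, hQE, hCE⟩ := par_strip hstep hPC
      exact ⟨E, hQE, hBC.tail hCE⟩

theorem betaStar_confluent {M A B : Lam} (h1 : BetaStar M A) (h2 : BetaStar M B) :
    ∃ C, BetaStar A C ∧ BetaStar B C := by
  obtain ⟨C, h1', h2'⟩ := parStar_confluent (parStar_of_betaStar h1) (parStar_of_betaStar h2)
  exact ⟨C, betaStar_of_parStar h1', betaStar_of_parStar h2'⟩

theorem conv_common_reduct {M N : Lam} (h : BetaConv M N) :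
    ∃ C, BetaStar M C ∧ BetaStar N C := by
  induction h with
  | rel _ _ hr => exact ⟨_, Relation.ReflTransGen.single hr, Relation.ReflTransGen.refl⟩
  | refl _ => exact ⟨_, Relation.ReflTransGen.refl, Relation.ReflTransGen.refl⟩
  | symm _ _ _ ih => obtain ⟨C, h1, h2⟩ := ih; exact ⟨C, h2, h1⟩
  | trans _ _ _ _ _ ih1 ih2 =>
      obtain ⟨C, h1, h2⟩ := ih1
      obtain ⟨E, h3, h4⟩ := ih2
      obtain ⟨F, h5, h6⟩ := betaStar_confluent h2 h3
      exact ⟨F, h1.trans h5, h4.trans h6⟩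

theorem beta_iComb_none {X : Lam} (h : Beta iComb X) : False := by
  cases h with
  | lam h => cases h

theorem betaStar_iComb {X : Lam} (h : BetaStar iComb X) : X = iComb := by
  induction h with
  | refl => rfl
  | tail hst hstep ih => subst ih; exact absurd hstep beta_iComb_none

theorem conv_to_iComb {M : Lam} (h : BetaConv M iComb) : BetaStar M iComb := by
  obtain ⟨C, h1, h2⟩ := conv_common_reduct h
  rwa [betaStar_iComb h2] at h1

/-! ### Spine analysis, genericity and Ω-power unsolvability -/

inductive StepList (R : Lam → Lam → Prop) : List Lam → List Lam → Prop
  | head {a b l} : R a b → StepList R (a :: l) (b :: l)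
  | tail {a l l'} : StepList R l l' → StepList R (a :: l) (a :: l')

theorem stepList_closed {l l' : List Lam} (h : StepList Beta l l')
    (hl : ∀ A ∈ l, Closed A) : ∀ A ∈ l', Closed A := by
  induction h with
  | head hab =>
      intro A hA
      rcases List.mem_cons.mp hA with rfl | hA
      · exact beta_closedUnder hab (hl _ (by simp))
      · exact hl _ (by simp [hA])
  | tail _ ih =>
      intro A hA
      rcases List.mem_cons.mp hA with rfl | hA
      · exact hl _ (by simp)
      · exact ih (fun B hB => hl _ (by simp [hB])) _ hA

theorem beta_appList_inv {M : Lam} {Ns : List Lam} {X : Lam}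
    (h : Beta (appList M Ns) X) :
    (∃ M', Beta M M' ∧ X = appList M' Ns) ∨
    (∃ Ns', StepList Beta Ns Ns' ∧ X = appList M Ns') ∨
    (∃ U N Ns', M = lam U ∧ Ns = N :: Ns' ∧ X = appList (subst 0 N U) Ns') := by
  induction Ns generalizing M X with
  | nil => exact Or.inl ⟨X, h, rfl⟩
  | cons N Ns ih =>
      rcases ih (M := app M N) h with ⟨M', hM', rfl⟩ | ⟨Ns', hNs', rfl⟩ |
        ⟨U, A, Ns', hMeq, rfl, rfl⟩
      · cases hM' with
        | beta U V => exact Or.inr (Or.inr ⟨U, N, Ns, rfl, rfl, rfl⟩)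
        | appL _ h' => exact Or.inl ⟨_, h', rfl⟩
        | appR _ h' => exact Or.inr (Or.inl ⟨_, StepList.head h', rfl⟩)
      · exact Or.inr (Or.inl ⟨N :: Ns', StepList.tail hNs', rfl⟩)
      · exact absurd hMeq (by simp)

inductive BetaN : ℕ → Lam → Lam → Prop
  | refl (M) : BetaN 0 M M
  | head {n M N P} : Beta M N → BetaN n N P → BetaN (n + 1) M P

theorem betaN_snoc {n : ℕ} {M P Q : Lam} (h : BetaN n M P) (hs : Beta P Q) :
    BetaN (n + 1) M Q := by
  induction h with
  | refl M => exact BetaN.head hs (BetaN.refl Q)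
  | head hst _ ih => exact BetaN.head hst (ih hs)

theorem betaStar_of_betaN {n : ℕ} {M N : Lam} (h : BetaN n M N) : BetaStar M N := by
  induction h with
  | refl M => exact Relation.ReflTransGen.refl
  | head hst _ ih => exact ih.head hst

theorem betaN_inv {n : ℕ} {P Q : Lam} (h : BetaN n P Q) :
    (n = 0 ∧ P = Q) ∨ ∃ t X, n = t + 1 ∧ Beta P X ∧ BetaN t X Q := by
  cases h with
  | refl _ => exact Or.inl ⟨rfl, rfl⟩
  | head hst hrest => exact Or.inr ⟨_, _, rfl, hst, hrest⟩

theorem betaN_of_betaStar {M N : Lam} (h : BetaStar M N) : ∃ n, BetaN n M N := by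
  induction h with
  | refl => exact ⟨0, BetaN.refl M⟩
  | tail _ hstep ih => obtain ⟨n, hn⟩ := ih; exact ⟨n + 1, betaN_snoc hn hstep⟩

theorem appList_app_ne_lam : ∀ (Ns : List Lam) (M N U : Lam),
    appList (app M N) Ns ≠ lam U := by
  intro Ns
  induction Ns with
  | nil => intro M N U h; cases h
  | cons A Ns ih => intro M N U h; exact ih _ _ _ h

theorem beta_omegaComb_none {X : Lam} (h : Beta omegaComb X) : False := by
  cases h with
  | lam h' =>
      cases h' with
      | appL _ h'' => cases h''
      | appR _ h'' => cases h''

theorem beta_Omega {X : Lam} (h : Beta Omega X) : X = Omega := by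
  cases h with
  | beta U V => rfl
  | appL _ h' => exact absurd h' (fun h'' => beta_omegaComb_none h'')
  | appR _ h' => exact absurd h' (fun h'' => beta_omegaComb_none h'')

theorem beta_omega_spine {Ns : List Lam} {X : Lam} (h : Beta (appList Omega Ns) X) :
    ∃ Ns', X = appList Omega Ns' := by
  rcases beta_appList_inv h with ⟨M', hM', rfl⟩ | ⟨Ns', _, rfl⟩ | ⟨U, N, Ns', hMeq, _, _⟩
  · rw [beta_Omega hM']; exact ⟨Ns, rfl⟩
  · exact ⟨Ns', rfl⟩
  · exact absurd hMeq (by simp [Omega])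

theorem betaStar_omega_spine {Ns : List Lam} {X : Lam}
    (h : BetaStar (appList Omega Ns) X) : ∃ Ns', X = appList Omega Ns' := by
  induction h with
  | refl => exact ⟨Ns, rfl⟩
  | tail _ hstep ih =>
      obtain ⟨Ns', rfl⟩ := ih
      exact beta_omega_spine hstep

theorem closed_Omega : Closed Omega := by decide

theorem unsolvable_Omega : ¬ Solvable Omega := by
  intro hs
  rw [solvable_iff_closed closed_Omega] at hs
  obtain ⟨Ns, _, hconv⟩ := hs
  obtain ⟨Ns', hNs'⟩ := betaStar_omega_spine (conv_to_iComb hconv)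
  match Ns', hNs' with
  | [], h => exact absurd h (by decide)
  | N :: Ns'', h => exact appList_app_ne_lam Ns'' Omega N (var 0) h.symm

/-! ### The replacement relation (genericity) -/

inductive Rep (N : Lam) : Lam → Lam → Prop
  | omega : Rep N Omega N
  | var (n) : Rep N (var n) (var n)
  | app {A A' B B'} : Rep N A A' → Rep N B B' → Rep N (app A B) (app A' B')
  | lam {A A'} : Rep N A A' → Rep N (lam A) (lam A')

theorem Rep.rfl (N M : Lam) : Rep N M M := by
  induction M with
  | var n => exact Rep.var n
  | app A B ihA ihB => exact Rep.app ihA ihB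
  | lam M ih => exact Rep.lam ih

theorem rep_lift {N A B : Lam} (hN : Closed N) (h : Rep N A B) (d : ℕ) :
    Rep N (lift d A) (lift d B) := by
  induction h generalizing d with
  | omega =>
      rw [lift_of_closedUnder closed_Omega (Nat.zero_le d), lift_of_closedUnder hN (Nat.zero_le d)]
      exact Rep.omega
  | var n => exact Rep.rfl _ _
  | app _ _ ih1 ih2 => exact Rep.app (ih1 d) (ih2 d)
  | lam _ ih => exact Rep.lam (ih (d + 1))

theorem rep_subst {N A A' B B' : Lam} (hN : Closed N) (h : Rep N A A')
    (hB : Rep N B B') (k : ℕ) : Rep N (subst k B A) (subst k B' A') := by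
  induction h generalizing k B B' with
  | omega =>
      rw [subst_of_closedUnder closed_Omega (Nat.zero_le k),
        subst_of_closedUnder hN (Nat.zero_le k)]
      exact Rep.omega
  | var n =>
      simp only [subst]; split_ifs
      · exact hB
      · exact Rep.rfl _ _
      · exact Rep.rfl _ _
  | app _ _ ih1 ih2 => exact Rep.app (ih1 hB k) (ih2 hB k)
  | lam _ ih => exact Rep.lam (ih (rep_lift hN hB 0) (k + 1))

theorem rep_beta {N P Q P' : Lam} (hN : Closed N) (hrep : Rep N P Q) (h : Beta P P') :
    ∃ Q', Rep N P' Q' ∧ BetaStar Q Q' := by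
  induction h generalizing Q with
  | beta U V =>
      cases hrep with
      | omega =>
          refine ⟨N, ?_, Relation.ReflTransGen.refl⟩
          have e : subst 0 omegaComb (app (var 0) (var 0)) = Omega := by decide
          exact e ▸ Rep.omega
      | app h1 h2 =>
          cases h1 with
          | lam hU =>
              exact ⟨_, rep_subst hN hU h2 0,
                Relation.ReflTransGen.single (Beta.beta _ _)⟩
  | appL Z hst ih =>
      cases hrep with
      | omega => exact absurd hst (fun h' => beta_omegaComb_none h')
      | app h1 h2 =>
          obtain ⟨Q₁, hr, hbs⟩ := ih h1
          exact ⟨app Q₁ _, Rep.app hr h2, BetaStar.appLc _ hbs⟩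
  | appR Z hst ih =>
      cases hrep with
      | omega => exact absurd hst (fun h' => beta_omegaComb_none h')
      | app h1 h2 =>
          obtain ⟨Q₂, hr, hbs⟩ := ih h2
          exact ⟨app _ Q₂, Rep.app h1 hr, BetaStar.appRc _ hbs⟩
  | lam hst ih =>
      cases hrep with
      | lam h1 =>
          obtain ⟨Q₁, hr, hbs⟩ := ih h1
          exact ⟨lam Q₁, Rep.lam hr, BetaStar.lamc hbs⟩

theorem rep_betaStar {N P Q P' : Lam} (hN : Closed N) (hrep : Rep N P Q)
    (h : BetaStar P P') : ∃ Q', Rep N P' Q' ∧ BetaStar Q Q' := by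
  induction h with
  | refl => exact ⟨Q, hrep, Relation.ReflTransGen.refl⟩
  | tail _ hstep ih =>
      obtain ⟨Q₁, hr, hbs⟩ := ih
      obtain ⟨Q₂, hr2, hbs2⟩ := rep_beta hN hr hstep
      exact ⟨Q₂, hr2, hbs.trans hbs2⟩

theorem rep_iComb {N Q : Lam} (h : Rep N iComb Q) : Q = iComb := by
  cases h with
  | lam h1 => cases h1 with | var => rfl

theorem rep_appList {N A A' : Lam} (h : Rep N A A') (l : List Lam) :
    Rep N (appList A l) (appList A' l) := by
  induction l generalizing A A' with
  | nil => exact h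
  | cons B l ih => exact ih (Rep.app h (Rep.rfl N B))

theorem genericity {N P Q : Lam} (hN : Closed N) (hrep : Rep N P Q)
    (h : BetaStar P iComb) : BetaStar Q iComb := by
  obtain ⟨Q', hr, hbs⟩ := rep_betaStar hN hrep h
  rwa [rep_iComb hr] at hbs

/-! ### Main unsolvability lemma: every solvable closed term is killed by enough Ω's -/

theorem closed_replicate_Omega (k : ℕ) : ∀ A ∈ List.replicate k Omega, Closed A := by
  intro A hA
  rw [List.eq_of_mem_replicate hA]
  exact closed_Omega

theorem solvable_omega_power {ℓ : ℕ} :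
    ∀ {M : Lam} {Ns : List Lam}, Closed M → (∀ A ∈ Ns, Closed A) →
    BetaN ℓ (appList M Ns) iComb →
    ∃ k, ¬ Solvable (appList M (List.replicate k Omega)) := by
  induction ℓ using Nat.strong_induction_on with
  | _ ℓ ih =>
  intro M Ns hM hNs hred
  match Ns, hNs with
  | [], _ =>
      refine ⟨1, fun hS => unsolvable_Omega ?_⟩
      have hMI : BetaStar M iComb := betaStar_of_betaN hred
      have hconv : BetaConv (app M Omega) Omega := by
        refine BetaConv.transc (conv_appL Omega (BetaConv.of_star hMI)) ?_
        have : Beta (app iComb Omega) Omega := by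
          have h := Beta.beta (var 0) Omega
          simpa [subst, iComb] using h
        exact Relation.EqvGen.rel _ _ this
      exact solvable_of_conv (closed_app hM closed_Omega) closed_Omega hconv
        (by simpa [appList, List.replicate] using hS)
  | N :: Ns', hNs =>
      have hNc : Closed N := hNs N (by simp)
      have hNs'c : ∀ A ∈ Ns', Closed A := fun A hA => hNs A (by simp [hA])
      rcases betaN_inv hred with ⟨_, heq⟩ | ⟨t, X, rfl, hstep, hrest⟩
      · exact absurd heq (appList_app_ne_lam Ns' M N (var 0))
      · rcases beta_appList_inv hstep with ⟨M', hM', rfl⟩ | ⟨Ns₂, hstepL, rfl⟩ |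
          ⟨U, A, Ns₂, hMeq, hcons, rfl⟩
        · obtain ⟨k, hk⟩ := ih t (by omega) (beta_closedUnder hM' hM) hNs hrest
          refine ⟨k, fun hS => hk ?_⟩
          refine solvable_of_conv (closed_appList hM (closed_replicate_Omega k))
            (closed_appList (beta_closedUnder hM' hM) (closed_replicate_Omega k)) ?_ hS
          exact conv_appList _ (Relation.EqvGen.rel _ _ hM')
        · exact ih t (by omega) hM (stepList_closed hstepL hNs) hrest
        · subst hMeq
          obtain ⟨rfl, rfl⟩ : N = A ∧ Ns' = Ns₂ := by
            constructor <;> injection hcons <;> simp_all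
          have hU1 : ClosedUnder 1 U := hM
          have hsubNc : Closed (subst 0 N U) := closedUnder_subst hU1 hNc le_rfl
          obtain ⟨k, hk⟩ := ih t (by omega) hsubNc hNs'c hrest
          refine ⟨k + 1, fun hS => hk ?_⟩
          -- appList (lam U) Ω^(k+1) =β appList (subst 0 Ω U) Ω^k
          have e1 : appList (lam U) (List.replicate (k + 1) Omega) =
              appList (app (lam U) Omega) (List.replicate k Omega) := by
            rw [List.replicate_succ]; rfl
          have hsubOc : Closed (subst 0 Omega U) := closedUnder_subst hU1 closed_Omega le_rfl
          have hS2 : Solvable (appList (subst 0 Omega U) (List.replicate k Omega)) := by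
            refine solvable_of_conv
              (closed_appList (closed_lam hU1) (closed_replicate_Omega (k+1)))
              (closed_appList hsubOc (closed_replicate_Omega k)) ?_ hS
            rw [e1]
            exact conv_appList _ (Relation.EqvGen.rel _ _ (Beta.beta U Omega))
          -- genericity: replace the substituted Ω's by N
          rw [solvable_iff_closed (closed_appList hsubOc (closed_replicate_Omega k))] at hS2
          obtain ⟨Bs, hBs, hconv⟩ := hS2
          rw [solvable_iff_closed (closed_appList hsubNc (closed_replicate_Omega k))]
          refine ⟨Bs, hBs, ?_⟩
          rw [← appList_append] at hconv ⊢
          have hrep : Rep N (appList (subst 0 Omega U) (List.replicate k Omega ++ Bs))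
              (appList (subst 0 N U) (List.replicate k Omega ++ Bs)) :=
            rep_appList (rep_subst hNc (Rep.rfl N U) Rep.omega 0) _
          exact BetaConv.of_star (genericity hNc hrep (conv_to_iComb hconv))

/-! ### Concrete computations: numerals, Θ, uΩ -/

theorem closed_iComb : Closed iComb := by decide
theorem closed_Kstar : Closed Kstar := by decide
theorem closed_thetaHalf : Closed thetaHalf := by decide
theorem closed_Theta : Closed Theta := by decide
theorem closed_sigma : Closed sigma := by decide
theorem closed_uOmega : Closed uOmega := by decide

theorem closedUnder_churchBody (n : ℕ) : ClosedUnder 2 (churchBody n) := by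
  induction n with
  | zero => decide
  | succ n ih => exact ⟨by decide, ih⟩

theorem closed_church (n : ℕ) : Closed (church n) := closedUnder_churchBody n

def iterApp : ℕ → Lam → Lam → Lam
  | 0, _, Z => Z
  | n + 1, F, Z => app F (iterApp n F Z)

theorem churchBody_subst {F : Lam} (hF : Closed F) (Z : Lam) (n : ℕ) :
    subst 0 Z (subst 1 F (churchBody n)) = iterApp n F Z := by
  induction n with
  | zero => simp [churchBody, subst, iterApp]
  | succ n ih =>
      simp only [churchBody, subst, iterApp, if_pos, show (1:ℕ) ≠ 0 by decide]
      rw [subst_closed hF, ih]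

theorem church_app {F : Lam} (hF : Closed F) (Z : Lam) (n : ℕ) :
    BetaStar (app (app (church n) F) Z) (iterApp n F Z) := by
  have h1 : Beta (app (church n) F) (lam (subst 1 F (churchBody n))) := by
    have h := Beta.beta (lam (churchBody n)) F
    simpa [church, subst, lift_closed hF] using h
  have h2 : Beta (app (lam (subst 1 F (churchBody n))) Z)
      (subst 0 Z (subst 1 F (churchBody n))) := Beta.beta _ _
  rw [churchBody_subst hF Z n] at h2
  exact Relation.ReflTransGen.head (Beta.appL Z h1) (Relation.ReflTransGen.single h2)

theorem churchBody_shift (n : ℕ) :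
    subst 0 (var 0) (subst 1 (var 2) (churchBody n)) = churchBody n := by
  induction n with
  | zero => simp [churchBody, subst]
  | succ n ih => simp only [churchBody, subst, ih]; norm_num

theorem sigma_church (n : ℕ) : BetaStar (app sigma (church n)) (church (n + 1)) := by
  have h1 : Beta (app sigma (church n))
      (lam (lam (app (var 1) (app (app (church n) (var 1)) (var 0))))) := by
    have h := Beta.beta (lam (lam (app (var 1) (app (app (var 2) (var 1)) (var 0))))) (church n)
    have e : subst 0 (church n) (lam (lam (app (var 1) (app (app (var 2) (var 1)) (var 0))))) =
        lam (lam (app (var 1) (app (app (church n) (var 1)) (var 0)))) := by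
      simp only [subst, lift_closed (closed_church n)]
      norm_num
    rw [e] at h
    exact h
  have h2 : Beta (app (church n) (var 1)) (lam (subst 1 (var 2) (churchBody n))) := by
    have h := Beta.beta (lam (churchBody n)) (var 1)
    simpa [church, subst, lift] using h
  have h3 : Beta (app (lam (subst 1 (var 2) (churchBody n))) (var 0))
      (subst 0 (var 0) (subst 1 (var 2) (churchBody n))) := Beta.beta _ _
  rw [churchBody_shift n] at h3
  refine Relation.ReflTransGen.head h1 ?_
  have hin : BetaStar (app (app (church n) (var 1)) (var 0)) (churchBody n) :=
    Relation.ReflTransGen.head (Beta.appL (var 0) h2) (Relation.ReflTransGen.single h3)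
  have : BetaStar (lam (lam (app (var 1) (app (app (church n) (var 1)) (var 0)))))
      (lam (lam (app (var 1) (churchBody n)))) :=
    BetaStar.lamc (BetaStar.lamc (BetaStar.appRc _ hin))
  exact this

theorem theta_unfold (F : Lam) : BetaStar (app Theta F) (app F (app Theta F)) := by
  have h1 : Beta (app thetaHalf thetaHalf)
      (lam (app (var 0) (app (app thetaHalf thetaHalf) (var 0)))) := by
    have h := Beta.beta (lam (app (var 0) (app (app (var 1) (var 1)) (var 0)))) thetaHalf
    simpa [thetaHalf, subst, lift, lift_closed closed_thetaHalf,
      subst_closed closed_thetaHalf] using h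
  have h2 : Beta (app (lam (app (var 0) (app (app thetaHalf thetaHalf) (var 0)))) F)
      (app F (app (app thetaHalf thetaHalf) F)) := by
    have h := Beta.beta (app (var 0) (app (app thetaHalf thetaHalf) (var 0))) F
    simpa [subst, subst_closed closed_thetaHalf] using h
  exact Relation.ReflTransGen.head (Beta.appL F h1) (Relation.ReflTransGen.single h2)

theorem uOmega_iter {N : Lam} (n : ℕ) :
    BetaStar (iterApp n uOmega N) (appList N (List.replicate n Omega)) := by
  induction n with
  | zero => exact Relation.ReflTransGen.refl
  | succ n ih =>
      have h1 : BetaStar (app uOmega (iterApp n uOmega N))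
          (app uOmega (appList N (List.replicate n Omega))) := BetaStar.appRc _ ih
      have h2 : Beta (app uOmega (appList N (List.replicate n Omega)))
          (app (appList N (List.replicate n Omega)) Omega) := by
        have h := Beta.beta (app (var 0) Omega) (appList N (List.replicate n Omega))
        simpa [uOmega, subst, subst_closed closed_Omega] using h
      have e : appList N (List.replicate (n + 1) Omega) =
          app (appList N (List.replicate n Omega)) Omega := by
        rw [List.replicate_succ', appList_snoc]
      rw [show iterApp (n + 1) uOmega N = app uOmega (iterApp n uOmega N) from rfl, e]
      exact h1.tail h2

/-! ### Unfolding the B-terms -/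

theorem closedUnder_lam {k : ℕ} {M : Lam} (h : ClosedUnder (k + 1) M) :
    ClosedUnder k (lam M) := h

theorem subst_lam_closed {b : Lam} (hb : Closed b) (k : ℕ) (B : Lam) :
    subst k b (lam B) = lam (subst (k + 1) b B) := by
  simp only [subst, lift_closed hb]

/-- λz. b (X ⋆ z). -/
def Larg (b star X : Lam) : Lam := lam (app b (app (app star X) (var 0)))

/-- The body (one free variable y = var 0) obtained by unfolding B b X. -/
def CB (D star b : Lam) (i : ℕ) (X : Lam) : Lam :=
  app (app (app (app (app (app (app D X) (church i)) thetaHalf) thetaHalf)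
    pairG) (church 0)) (Larg b star X)

/-- pairG with y instantiated to the closed term N. -/
def pairY (N : Lam) : Lam :=
  lam (lam (lam (lam (app (app (var 0) (app (var 1) (var 2)))
    (app (app (app (var 2) uOmega) N)
      (app (app (var 3) (app sigma (var 2))) (var 1)))))))

def GN (N : Lam) : Lam := app (app thetaHalf thetaHalf) (pairY N)

/-- CB with y instantiated. -/
def CBN (D star b : Lam) (i : ℕ) (X N : Lam) : Lam :=
  app (app (app (app (app (app (app D X) (church i)) thetaHalf) thetaHalf)
    (pairY N)) (church 0)) (Larg b star X)

theorem closed_Larg {b star X : Lam} (hb : Closed b) (hstar : Closed star)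
    (hX : Closed X) : Closed (Larg b star X) := by
  apply closed_lam
  exact ⟨closedUnder_mono hb (by omega),
    ⟨closedUnder_mono hstar (by omega), closedUnder_mono hX (by omega)⟩, by decide⟩

theorem closed_pairY {N : Lam} (hN : Closed N) : Closed (pairY N) := by
  apply closed_lam
  refine ⟨⟨by decide, by decide, by decide⟩,
    ⟨⟨by decide, by decide⟩, closedUnder_mono hN (by omega)⟩,
    ⟨by decide, by decide, by decide⟩, by decide⟩

theorem closed_GN {N : Lam} (hN : Closed N) : Closed (GN N) :=
  closed_app (closed_app closed_thetaHalf closed_thetaHalf) (closed_pairY hN)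

theorem closedUnder_pairG : ClosedUnder 1 pairG := by decide

theorem closedUnder_CB {D star b X : Lam} (hD : Closed D) (hstar : Closed star)
    (hb : Closed b) (hX : Closed X) (i : ℕ) : ClosedUnder 1 (CB D star b i X) := by
  refine ⟨⟨⟨⟨⟨⟨⟨closedUnder_mono hD (by omega), closedUnder_mono hX (by omega)⟩,
    closedUnder_mono (closed_church i) (by omega)⟩, by decide⟩, by decide⟩,
    closedUnder_pairG⟩, closedUnder_mono (closed_church 0) (by omega)⟩,
    closedUnder_mono (closed_Larg hb hstar hX) (by omega)⟩

theorem closed_CBN {D star b X N : Lam} (hD : Closed D) (hstar : Closed star)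
    (hb : Closed b) (hX : Closed X) (hN : Closed N) (i : ℕ) :
    Closed (CBN D star b i X N) :=
  closed_app (closed_app (closed_app (closed_app (closed_app (closed_app
    (closed_app hD hX) (closed_church i)) closed_thetaHalf) closed_thetaHalf)
    (closed_pairY hN)) (closed_church 0)) (closed_Larg hb hstar hX)

theorem closed_Fterm {D star : Lam} (hD : Closed D) (hstar : Closed star) (i : ℕ) :
    Closed (Fterm D star i) := by
  apply closed_lam; apply closedUnder_lam; apply closedUnder_lam
  refine ⟨⟨⟨⟨⟨⟨⟨closedUnder_mono hD (by omega), by decide⟩,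
    closedUnder_mono (closed_church i) (by omega)⟩, by decide⟩, by decide⟩,
    closedUnder_mono closedUnder_pairG (by omega)⟩,
    closedUnder_mono (closed_church 0) (by omega)⟩, ?_⟩
  apply closedUnder_mono (k := 3) ?_ (le_refl 3)
  exact show ClosedUnder 3 (lastArg star) from
    ⟨by decide, ⟨closedUnder_mono hstar (by omega), by decide⟩, by decide⟩

theorem closed_Bterm {D star : Lam} (hD : Closed D) (hstar : Closed star) (i : ℕ) :
    Closed (Bterm D star i) := closed_app closed_Theta (closed_Fterm hD hstar i)

theorem BF_unfold {D star b X : Lam} (hD : Closed D) (hstar : Closed star)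
    (hb : Closed b) (hX : Closed X) (i : ℕ) :
    BetaStar (app (app (Fterm D star i) b) X) (lam (CB D star b i X)) := by
  have hD' : ∀ k N, subst k N D = D := fun k N => subst_closed hD
  have hs' : ∀ k N, subst k N star = star := fun k N => subst_closed hstar
  have hb' : ∀ k N, subst k N b = b := fun k N => subst_closed hb
  have hX' : ∀ k N, subst k N X = X := fun k N => subst_closed hX
  have hth' : ∀ k N, subst k N thetaHalf = thetaHalf :=
    fun k N => subst_closed closed_thetaHalf
  have hsig' : ∀ k N, subst k N sigma = sigma := fun k N => subst_closed closed_sigma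
  have huo' : ∀ k N, subst k N uOmega = uOmega := fun k N => subst_closed closed_uOmega
  have hbl : ∀ d, lift d b = b := fun d => lift_closed hb
  have hXl : ∀ d, lift d X = X := fun d => lift_closed hX
  have hcb2 : ∀ M : Lam, subst 2 M (churchBody i) = churchBody i :=
    fun M => subst_of_closedUnder (closedUnder_churchBody i) (by omega)
  have hcb3 : ∀ M : Lam, subst 3 M (churchBody i) = churchBody i :=
    fun M => subst_of_closedUnder (closedUnder_churchBody i) (by omega)
  have hcb4 : ∀ M : Lam, subst 4 M (churchBody i) = churchBody i :=
    fun M => subst_of_closedUnder (closedUnder_churchBody i) (by omega)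
  have step1 : Beta (app (Fterm D star i) b)
      (subst 0 b (lam (lam (app (app (app (app (app (app (app D (var 1)) (church i))
        thetaHalf) thetaHalf) pairG) (church 0)) (lastArg star))))) := Beta.beta _ b
  have e1 : (subst 0 b (lam (lam (app (app (app (app (app (app (app D (var 1)) (church i))
        thetaHalf) thetaHalf) pairG) (church 0)) (lastArg star))))) =
      lam (lam (app (app (app (app (app (app (app D (var 1)) (church i))
        thetaHalf) thetaHalf) pairG) (church 0))
        (lam (app b (app (app star (var 2)) (var 0)))))) := by
    simp only [CB, CBN, Larg, pairG, pairY, GN, church, churchBody, thetaHalf, sigma, uOmega, Omega, omegaComb, lastArg, subst, lift, hD', hs', hb', hX', hth', hsig', huo', hbl, hXl, hcb2, hcb3, hcb4]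
    norm_num
  rw [e1] at step1
  have step2 : Beta (app (lam (lam (app (app (app (app (app (app (app D (var 1)) (church i))
        thetaHalf) thetaHalf) pairG) (church 0))
        (lam (app b (app (app star (var 2)) (var 0))))))) X)
      (subst 0 X (lam (app (app (app (app (app (app (app D (var 1)) (church i))
        thetaHalf) thetaHalf) pairG) (church 0))
        (lam (app b (app (app star (var 2)) (var 0))))))) := Beta.beta _ X
  have e2 : (subst 0 X (lam (app (app (app (app (app (app (app D (var 1)) (church i))
        thetaHalf) thetaHalf) pairG) (church 0))
        (lam (app b (app (app star (var 2)) (var 0))))))) = lam (CB D star b i X) := by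
    simp only [CB, CBN, Larg, pairG, pairY, GN, church, churchBody, thetaHalf, sigma, uOmega, Omega, omegaComb, lastArg, subst, lift, hD', hs', hb', hX', hth', hsig', huo', hbl, hXl, hcb2, hcb3, hcb4]
    norm_num
  rw [e2] at step2
  exact Relation.ReflTransGen.head (Beta.appL X step1) (Relation.ReflTransGen.single step2)

theorem Bx_unfold {D star X : Lam} (hD : Closed D) (hstar : Closed star)
    (hX : Closed X) (i : ℕ) :
    BetaStar (app (Bterm D star i) X) (lam (CB D star (Bterm D star i) i X)) := by
  have h1 : BetaStar (app (app Theta (Fterm D star i)) X)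
      (app (app (Fterm D star i) (Bterm D star i)) X) :=
    BetaStar.appLc X (theta_unfold (Fterm D star i))
  exact h1.trans (BF_unfold hD hstar (closed_Bterm hD hstar i) hX i)

theorem CB_subst {D star b X N : Lam} (hD : Closed D) (hstar : Closed star)
    (hb : Closed b) (hX : Closed X) (hN : Closed N) (i : ℕ) :
    subst 0 N (CB D star b i X) = CBN D star b i X N := by
  have hD' : ∀ k M, subst k M D = D := fun k M => subst_closed hD
  have hs' : ∀ k M, subst k M star = star := fun k M => subst_closed hstar
  have hb' : ∀ k M, subst k M b = b := fun k M => subst_closed hb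
  have hX' : ∀ k M, subst k M X = X := fun k M => subst_closed hX
  have hth' : ∀ k M, subst k M thetaHalf = thetaHalf :=
    fun k M => subst_closed closed_thetaHalf
  have hsig' : ∀ k M, subst k M sigma = sigma := fun k M => subst_closed closed_sigma
  have huo' : ∀ k M, subst k M uOmega = uOmega := fun k M => subst_closed closed_uOmega
  have hbl : ∀ d, lift d b = b := fun d => lift_closed hb
  have hXl : ∀ d, lift d X = X := fun d => lift_closed hX
  have hN' : ∀ k M, subst k M N = N := fun k M => subst_closed hN
  have hNl : ∀ d, lift d N = N := fun d => lift_closed hN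
  have hcb2 : ∀ M : Lam, subst 2 M (churchBody i) = churchBody i :=
    fun M => subst_of_closedUnder (closedUnder_churchBody i) (by omega)
  have hcb3 : ∀ M : Lam, subst 3 M (churchBody i) = churchBody i :=
    fun M => subst_of_closedUnder (closedUnder_churchBody i) (by omega)
  have hcb4 : ∀ M : Lam, subst 4 M (churchBody i) = churchBody i :=
    fun M => subst_of_closedUnder (closedUnder_churchBody i) (by omega)
  simp only [CB, CBN, Larg, pairG, pairY, GN, church, churchBody, thetaHalf, sigma, uOmega,
    Omega, omegaComb, lastArg, subst, lift, hD', hs', hb', hX', hth', hsig', huo',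
    hbl, hXl, hN', hNl, hcb2, hcb3, hcb4]
  norm_num

/-- Unfolding one step of the Θ(pairY N) machine. -/
theorem GN_unfold {N A L : Lam} (hN : Closed N) (hA : Closed A) (hL : Closed L) :
    BetaStar (app (app (app (app thetaHalf thetaHalf) (pairY N)) A) L)
      (lam (app (app (var 0) (app L A))
        (app (app (app A uOmega) N) (app (app (GN N) (app sigma A)) L)))) := by
  have hN' : ∀ k M, subst k M N = N := fun k M => subst_closed hN
  have hA' : ∀ k M, subst k M A = A := fun k M => subst_closed hA
  have hL' : ∀ k M, subst k M L = L := fun k M => subst_closed hL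
  have hG' : ∀ k M, subst k M (GN N) = GN N := fun k M => subst_closed (closed_GN hN)
  have hsig' : ∀ k M, subst k M sigma = sigma := fun k M => subst_closed closed_sigma
  have huo' : ∀ k M, subst k M uOmega = uOmega := fun k M => subst_closed closed_uOmega
  have hNl : ∀ d, lift d N = N := fun d => lift_closed hN
  have hAl : ∀ d, lift d A = A := fun d => lift_closed hA
  have hLl : ∀ d, lift d L = L := fun d => lift_closed hL
  have hGl : ∀ d, lift d (GN N) = GN N := fun d => lift_closed (closed_GN hN)
  have h0 : BetaStar (app (app (app (app thetaHalf thetaHalf) (pairY N)) A) L)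
      (app (app (app (pairY N) (GN N)) A) L) := by
    have := theta_unfold (pairY N)
    exact BetaStar.appLc L (BetaStar.appLc A this)
  refine h0.trans ?_
  have s1 : Beta (app (pairY N) (GN N))
      (lam (lam (lam (app (app (var 0) (app (var 1) (var 2)))
        (app (app (app (var 2) uOmega) N)
          (app (app (GN N) (app sigma (var 2))) (var 1))))))) := by
    have h := Beta.beta (lam (lam (lam (app (app (var 0) (app (var 1) (var 2)))
      (app (app (app (var 2) uOmega) N)
        (app (app (var 3) (app sigma (var 2))) (var 1))))))) (GN N)
    have e : subst 0 (GN N) (lam (lam (lam (app (app (var 0) (app (var 1) (var 2)))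
        (app (app (app (var 2) uOmega) N)
          (app (app (var 3) (app sigma (var 2))) (var 1))))))) =
        lam (lam (lam (app (app (var 0) (app (var 1) (var 2)))
          (app (app (app (var 2) uOmega) N)
            (app (app (GN N) (app sigma (var 2))) (var 1)))))) := by
      simp only [GN, pairY, church, churchBody, thetaHalf, sigma, uOmega, Omega, omegaComb, subst, lift, hN', hA', hL', hG', hsig', huo', hNl, hAl, hLl, hGl]
      norm_num
    rw [e] at h
    exact h
  have s2 : Beta (app (lam (lam (lam (app (app (var 0) (app (var 1) (var 2)))
        (app (app (app (var 2) uOmega) N)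
          (app (app (GN N) (app sigma (var 2))) (var 1))))))) A)
      (lam (lam (app (app (var 0) (app (var 1) A))
        (app (app (app A uOmega) N)
          (app (app (GN N) (app sigma A)) (var 1)))))) := by
    have h := Beta.beta (lam (lam (app (app (var 0) (app (var 1) (var 2)))
      (app (app (app (var 2) uOmega) N)
        (app (app (GN N) (app sigma (var 2))) (var 1)))))) A
    have e : subst 0 A (lam (lam (app (app (var 0) (app (var 1) (var 2)))
        (app (app (app (var 2) uOmega) N)
          (app (app (GN N) (app sigma (var 2))) (var 1)))))) =
        lam (lam (app (app (var 0) (app (var 1) A))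
          (app (app (app A uOmega) N)
            (app (app (GN N) (app sigma A)) (var 1))))) := by
      simp only [GN, pairY, church, churchBody, thetaHalf, sigma, uOmega, Omega, omegaComb, subst, lift, hN', hA', hL', hG', hsig', huo', hNl, hAl, hLl, hGl]
      norm_num
    rw [e] at h
    exact h
  have s3 : Beta (app (lam (lam (app (app (var 0) (app (var 1) A))
        (app (app (app A uOmega) N)
          (app (app (GN N) (app sigma A)) (var 1)))))) L)
      (lam (app (app (var 0) (app L A))
        (app (app (app A uOmega) N) (app (app (GN N) (app sigma A)) L)))) := by
    have h := Beta.beta (lam (app (app (var 0) (app (var 1) A))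
      (app (app (app A uOmega) N)
        (app (app (GN N) (app sigma A)) (var 1))))) L
    have e : subst 0 L (lam (app (app (var 0) (app (var 1) A))
        (app (app (app A uOmega) N)
          (app (app (GN N) (app sigma A)) (var 1))))) =
        lam (app (app (var 0) (app L A))
          (app (app (app A uOmega) N) (app (app (GN N) (app sigma A)) L))) := by
      simp only [GN, pairY, church, churchBody, thetaHalf, sigma, uOmega, Omega, omegaComb, subst, lift, hN', hA', hL', hG', hsig', huo', hNl, hAl, hLl, hGl]
      norm_num
    rw [e] at h
    exact h
  exact Relation.ReflTransGen.head (Beta.appL L (Beta.appL A s1))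
    (Relation.ReflTransGen.head (Beta.appL L s2) (Relation.ReflTransGen.single s3))

/-! ### The inner fixed-point machine -/

def BC (N A L : Lam) : Lam :=
  app (app (app A uOmega) N) (app (app (GN N) (app sigma A)) L)

def PB (N A L : Lam) : Lam := app (app (var 0) (app L A)) (BC N A L)

theorem closed_BC {N A L : Lam} (hN : Closed N) (hA : Closed A) (hL : Closed L) :
    Closed (BC N A L) :=
  closed_app (closed_app (closed_app hA closed_uOmega) hN)
    (closed_app (closed_app (closed_GN hN) (closed_app closed_sigma hA)) hL)

theorem closedUnder_PB {N A L : Lam} (hN : Closed N) (hA : Closed A) (hL : Closed L) :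
    ClosedUnder 1 (PB N A L) :=
  ⟨⟨by decide, closedUnder_mono (closed_app hL hA) (by omega)⟩,
    closedUnder_mono (closed_BC hN hA hL) (by omega)⟩

theorem GN_unfold' {N A L : Lam} (hN : Closed N) (hA : Closed A) (hL : Closed L) :
    BetaStar (app (app (GN N) A) L) (lam (PB N A L)) :=
  GN_unfold hN hA hL

theorem PB_subst {N A L : Lam} (hN : Closed N) (hA : Closed A) (hL : Closed L)
    (Z : Lam) : subst 0 Z (PB N A L) = app (app Z (app L A)) (BC N A L) := by
  have e1 : subst 0 Z (app L A) = app L A := subst_closed (closed_app hL hA)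
  have e2 : subst 0 Z (BC N A L) = BC N A L := subst_closed (closed_BC hN hA hL)
  have e0 : subst 0 Z (var 0) = Z := by simp [subst]
  show app (app (subst 0 Z (var 0)) (subst 0 Z (app L A))) (subst 0 Z (BC N A L)) =
    app (app Z (app L A)) (BC N A L)
  rw [e0, e1, e2]

theorem claim_core {N A L₀ L₁ : Lam} (hN : Closed N) (hA : Closed A)
    (hL0 : Closed L₀) (hL1 : Closed L₁)
    (h1 : HOmega (app L₀ A) (app L₁ A))
    (h2 : HOmega (BC N A L₀) (BC N A L₁)) :
    HOmega (app (app (GN N) A) L₀) (app (app (GN N) A) L₁) := by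
  have r0 := homega_of_betaStar
    (closed_app (closed_app (closed_GN hN) hA) hL0) (GN_unfold' hN hA hL0)
  have r1 := homega_of_betaStar
    (closed_app (closed_app (closed_GN hN) hA) hL1) (GN_unfold' hN hA hL1)
  refine homega_trans r0 (homega_trans ?_ (homega_symm r1))
  apply homega_lam_ext (closedUnder_PB hN hA hL0) (closedUnder_PB hN hA hL1)
  intro Z hZ
  rw [PB_subst hN hA hL0 Z, PB_subst hN hA hL1 Z]
  refine homega_trans
    (homega_appL (homega_appR hZ h1) (closed_BC hN hA hL0)) ?_
  exact homega_appR (closed_app hZ (closed_app hL1 hA)) h2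

theorem BC_reduct {N L : Lam} (n : ℕ) :
    BetaStar (BC N (church n) L)
      (app (appList N (List.replicate n Omega))
        (app (app (GN N) (church (n + 1))) L)) := by
  have hleft : BetaStar (app (app (church n) uOmega) N)
      (appList N (List.replicate n Omega)) :=
    (church_app closed_uOmega N n).trans (uOmega_iter n)
  have hright : BetaStar (app (app (GN N) (app sigma (church n))) L)
      (app (app (GN N) (church (n + 1))) L) :=
    BetaStar.appLc L (BetaStar.appRc (GN N) (sigma_church n))
  exact (BetaStar.appLc _ hleft).trans (BetaStar.appRc _ hright)

theorem BC_unsolv {N L : Lam} (hN : Closed N) (hL : Closed L) (n : ℕ)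
    (hk : ¬ Solvable (appList N (List.replicate n Omega))) :
    ¬ Solvable (BC N (church n) L) := by
  intro hS
  have hT' : Closed (app (app (GN N) (church (n + 1))) L) :=
    closed_app (closed_app (closed_GN hN) (closed_church (n + 1))) hL
  have hNl : Closed (appList N (List.replicate n Omega)) :=
    closed_appList hN (closed_replicate_Omega n)
  have := solvable_of_conv (closed_BC hN (closed_church n) hL)
    (closed_app hNl hT') (BetaConv.of_star (BC_reduct n)) hS
  exact unsolvable_app hNl hT' hk this

/-- The central induction: the two machines are Hω-equal at every stage n. -/
theorem main_claim {N L₀ L₁ : Lam} (hN : Closed N) (hL0 : Closed L₀) (hL1 : Closed L₁)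
    (hfirst : ∀ n : ℕ, HOmega (app L₀ (church n)) (app L₁ (church n))) :
    ∀ n, HOmega (app (app (GN N) (church n)) L₀) (app (app (GN N) (church n)) L₁) := by
  by_cases hsolv : ∃ k, ¬ Solvable (appList N (List.replicate k Omega))
  · obtain ⟨k, hk⟩ := hsolv
    have unsCase : ∀ n, k ≤ n →
        HOmega (app (app (GN N) (church n)) L₀) (app (app (GN N) (church n)) L₁) := by
      intro n hkn
      have hunsn : ¬ Solvable (appList N (List.replicate n Omega)) := by
        have e : List.replicate n Omega =
            List.replicate k Omega ++ List.replicate (n - k) Omega := by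
          rw [← List.replicate_add]; congr 1; omega
        rw [e, appList_append]
        exact unsolvable_appList (closed_appList hN (closed_replicate_Omega k)) hk _
          (closed_replicate_Omega (n - k))
      exact claim_core hN (closed_church n) hL0 hL1 (hfirst n)
        (homega_unsolv_pair (closed_BC hN (closed_church n) hL0)
          (closed_BC hN (closed_church n) hL1)
          (BC_unsolv hN hL0 n hunsn) (BC_unsolv hN hL1 n hunsn))
    have step : ∀ n,
        HOmega (app (app (GN N) (church (n + 1))) L₀) (app (app (GN N) (church (n + 1))) L₁) →
        HOmega (app (app (GN N) (church n)) L₀) (app (app (GN N) (church n)) L₁) := by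
      intro n hnext
      refine claim_core hN (closed_church n) hL0 hL1 (hfirst n) ?_
      have hNl : Closed (appList N (List.replicate n Omega)) :=
        closed_appList hN (closed_replicate_Omega n)
      have r0 := homega_of_betaStar (closed_BC hN (closed_church n) hL0) (BC_reduct (L := L₀) n)
      have r1 := homega_of_betaStar (closed_BC hN (closed_church n) hL1) (BC_reduct (L := L₁) n)
      exact homega_trans r0 (homega_trans (homega_appR hNl hnext) (homega_symm r1))
    suffices H : ∀ j n, k ≤ n + j →
        HOmega (app (app (GN N) (church n)) L₀) (app (app (GN N) (church n)) L₁) by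
      intro n; exact H k n (by omega)
    intro j
    induction j with
    | zero => intro n hkn; exact unsCase n (by omega)
    | succ j ih =>
        intro n hkn
        by_cases hkn' : k ≤ n
        · exact unsCase n hkn'
        · exact step n (ih (n + 1) (by omega))
  · exfalso
    push_neg at hsolv
    have h0 : Solvable N := hsolv 0
    rw [solvable_iff_closed hN] at h0
    obtain ⟨Ns, hNs, hconv⟩ := h0
    obtain ⟨ℓ, hℓ⟩ := betaN_of_betaStar (conv_to_iComb hconv)
    obtain ⟨k, hk⟩ := solvable_omega_power hN (fun A hA => hNs A hA) hℓ
    exact hk (hsolv k)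

/-! ### From HeadWBeta to Beta -/

theorem headWBeta_to_beta {M N : Lam} (h : HeadWBeta M N) : Beta M N := by
  induction h with
  | head U V _ => exact Beta.beta U V
  | app N _ _ ih => exact Beta.appL N ih
  | lam _ ih => exact Beta.lam ih

theorem headWBetaStar_to_betaStar {M N : Lam}
    (h : Relation.ReflTransGen HeadWBeta M N) : BetaStar M N := by
  induction h with
  | refl => exact Relation.ReflTransGen.refl
  | tail _ hstep ih => exact ih.tail (headWBeta_to_beta hstep)

theorem Kstar_eats (A B : Lam) : BetaStar (app (app Kstar A) B) B := by
  have h1 : Beta (app Kstar A) iComb := by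
    have h := Beta.beta (lam (var 0)) A
    have e : subst 0 A (lam (var 0)) = iComb := by simp [subst, lift, iComb]
    rw [e] at h
    exact h
  have h2 : Beta (app iComb B) B := by
    have h := Beta.beta (var 0) B
    simpa [subst, iComb] using h
  exact Relation.ReflTransGen.head (Beta.appL B h1) (Relation.ReflTransGen.single h2)

theorem Larg_beta {b star X : Lam} (hb : Closed b) (hstar : Closed star)
    (hX : Closed X) (Z : Lam) :
    Beta (app (Larg b star X) Z) (app b (app (app star X) Z)) := by
  have h := Beta.beta (app b (app (app star X) (var 0))) Z
  have e : subst 0 Z (app b (app (app star X) (var 0))) =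
      app b (app (app star X) Z) := by
    simp only [subst, subst_closed hb, subst_closed hstar, subst_closed hX]
    norm_num
  rw [e] at h
  exact h

/-! ### Well-founded trees -/

inductive GoodT (T : List ℕ → Prop) : List ℕ → Prop
  | leaf {s} : ¬ T s → GoodT T s
  | node {s} : (∀ m : ℕ, GoodT T (s ++ [m])) → GoodT T s

theorem goodT_of_wf (T : List ℕ → Prop) (s : List ℕ)
    (hwf : ¬ ∃ f : ℕ → ℕ, ∀ n : ℕ, T (s ++ (List.range n).map f)) : GoodT T s := by
  by_contra hbad
  apply hwf
  have step : ∀ t, ¬ GoodT T t → ∃ m, ¬ GoodT T (t ++ [m]) := by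
    intro t ht
    by_contra h
    push_neg at h
    exact ht (GoodT.node h)
  have hT : ∀ t, ¬ GoodT T t → T t := by
    intro t ht
    by_contra h
    exact ht (GoodT.leaf h)
  let F : {t : List ℕ // ¬ GoodT T t} → {t : List ℕ // ¬ GoodT T t} := fun p =>
    ⟨p.1 ++ [Classical.choose (step p.1 p.2)], Classical.choose_spec (step p.1 p.2)⟩
  let seq : ℕ → {t : List ℕ // ¬ GoodT T t} := fun n => F^[n] ⟨s, hbad⟩
  have hseq_succ : ∀ n, seq (n + 1) = F (seq n) := by
    intro n
    simp only [seq, Function.iterate_succ_apply']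
  let f : ℕ → ℕ := fun n => Classical.choose (step (seq n).1 (seq n).2)
  have hval : ∀ n, (seq n).1 = s ++ (List.range n).map f := by
    intro n
    induction n with
    | zero => simp [seq]
    | succ n ih =>
        rw [hseq_succ n]
        show (seq n).1 ++ [f n] = _
        rw [ih, List.range_succ, List.map_append, ← List.append_assoc]
        rfl
  refine ⟨f, fun n => ?_⟩
  rw [← hval n]
  exact hT _ (seq n).2

/-- If the subtree T(s) is well founded then B₀ ⌜s⌝̲ =ω B₁ ⌜s⌝̲. -/
theorem wellFounded_imp_homega
    (T : List ℕ → Prop) (hTcomp : ComputablePred T)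
    (hTpre : ∀ s₁ s₂ : List ℕ, s₁ <+: s₂ → T s₂ → T s₁)
    (code : List ℕ ≃ ℕ) (hcode : Computable ⇑code) (hcode' : Computable ⇑code.symm)
    (D star : Lam) (hD : Closed D) (hstar : Closed star)
    -- (i) D x m̲ has a βΩ-normal form with head variable x containing m̲ as a subterm
    (hD1 : ∀ m : ℕ, ∃ Nf : Lam, BONormal Nf ∧ BOStar (app (app D (var 0)) (church m)) Nf ∧
      HeadVar 0 Nf ∧ Subterm (church m) Nf)
    -- (ii) for s ∈ T, D ⌜s⌝̲ head-weak-β-reduces to K*, and for s ∉ T it is unsolvable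
    (hD2 : ∀ s : List ℕ, T s → Relation.ReflTransGen HeadWBeta (app D (church (code s))) Kstar)
    (hD3 : ∀ s : List ℕ, ¬ T s → ¬ Solvable (app D (church (code s))))
    -- ⌜s⌝̲ ⋆ m̲ =β ⌜s ++ [m]⌝̲
    (hstar1 : ∀ (s : List ℕ) (m : ℕ),
      BetaConv (app (app star (church (code s))) (church m)) (church (code (s ++ [m]))))
    -- ⌜s⌝̲ ⋆ z has a βΩ-normal form with head variable z
    (hstar2 : ∀ s : List ℕ, ∃ Nf : Lam, BONormal Nf ∧
      BOStar (app (app star (church (code s))) (var 0)) Nf ∧ HeadVar 0 Nf)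
    (s : List ℕ)
    (hwf : ¬ ∃ f : ℕ → ℕ, ∀ n : ℕ, T (s ++ (List.range n).map f)) :
    HOmega (app (Bterm D star 0) (church (code s))) (app (Bterm D star 1) (church (code s))) := by
  have hgood := goodT_of_wf T s hwf
  have hb0 : Closed (Bterm D star 0) := closed_Bterm hD hstar 0
  have hb1 : Closed (Bterm D star 1) := closed_Bterm hD hstar 1
  have unsolvCase : ∀ (t : List ℕ), ¬ T t →
      HOmega (app (Bterm D star 0) (church (code t)))
        (app (Bterm D star 1) (church (code t))) := by
    intro t hTt
    have hX : Closed (church (code t)) := closed_church _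
    have hDu : ¬ Solvable (app D (church (code t))) := hD3 t hTt
    have key : ∀ i : ℕ, ¬ Solvable (app (Bterm D star i) (church (code t))) := by
      intro i
      have hbi : Closed (Bterm D star i) := closed_Bterm hD hstar i
      intro hS
      have hlam : ¬ Solvable (lam (CB D star (Bterm D star i) i (church (code t)))) := by
        apply unsolvable_lam (closedUnder_CB hD hstar hbi hX i)
        intro N hN
        rw [CB_subst hD hstar hbi hX hN i]
        exact unsolvable_appList (closed_app hD hX) hDu
          [church i, thetaHalf, thetaHalf, pairY N, church 0,
            Larg (Bterm D star i) star (church (code t))]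
          (by
            intro A hA
            fin_cases hA <;>
              first
                | exact closed_church _
                | exact closed_thetaHalf
                | exact closed_pairY hN
                | exact closed_Larg hbi hstar hX)
      exact hlam (solvable_of_conv (closed_app hbi hX)
        (closed_lam (closedUnder_CB hD hstar hbi hX i))
        (BetaConv.of_star (Bx_unfold hD hstar hX i)) hS)
    exact homega_unsolv_pair (closed_app hb0 (closed_church _))
      (closed_app hb1 (closed_church _)) (key 0) (key 1)
  suffices H : ∀ t, GoodT T t → HOmega (app (Bterm D star 0) (church (code t)))
      (app (Bterm D star 1) (church (code t))) from H s hgood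
  intro t hgoodt
  induction hgoodt with
  | @leaf t0 hTt => exact unsolvCase t0 hTt
  | @node t0 hch ih =>
      by_cases hTt : T t0
      swap
      · exact unsolvCase t0 hTt
      · have hX : Closed (church (code t0)) := closed_church _
        have hKs : BetaStar (app D (church (code t0))) Kstar :=
          headWBetaStar_to_betaStar (hD2 t0 hTt)
        have hL : ∀ i : ℕ, Closed (Larg (Bterm D star i) star (church (code t0))) := fun i =>
          closed_Larg (closed_Bterm hD hstar i) hstar hX
        have hfirst : ∀ n : ℕ,
            HOmega (app (Larg (Bterm D star 0) star (church (code t0))) (church n))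
                   (app (Larg (Bterm D star 1) star (church (code t0))) (church n)) := by
          intro n
          have piece : ∀ i : ℕ,
              HOmega (app (Larg (Bterm D star i) star (church (code t0))) (church n))
                     (app (Bterm D star i) (church (code (t0 ++ [n])))) := by
            intro i
            have hbi := closed_Bterm hD hstar i
            have h1 : HOmega (app (Larg (Bterm D star i) star (church (code t0))) (church n))
                (app (Bterm D star i) (app (app star (church (code t0))) (church n))) :=
              homega_of_beta (closed_app (hL i) (closed_church n))
                (Larg_beta hbi hstar hX (church n))
            have h2 : HOmega (app (Bterm D star i) (app (app star (church (code t0))) (church n)))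
                (app (Bterm D star i) (church (code (t0 ++ [n])))) :=
              homega_of_conv
                (closed_app hbi (closed_app (closed_app hstar hX) (closed_church n)))
                (closed_app hbi (closed_church _))
                (conv_appR _ (hstar1 t0 n))
            exact homega_trans h1 h2
          exact homega_trans (piece 0) (homega_trans (ih n) (homega_symm (piece 1)))
        have main : ∀ N : Lam, Closed N →
            HOmega (CBN D star (Bterm D star 0) 0 (church (code t0)) N)
                   (CBN D star (Bterm D star 1) 1 (church (code t0)) N) := by
          intro N hN
          have red : ∀ i : ℕ, BetaStar (CBN D star (Bterm D star i) i (church (code t0)) N)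
              (app (app (GN N) (church 0)) (Larg (Bterm D star i) star (church (code t0)))) := by
            intro i
            have s1 : BetaStar (appList (app D (church (code t0)))
                [church i, thetaHalf, thetaHalf, pairY N, church 0,
                  Larg (Bterm D star i) star (church (code t0))])
                (appList Kstar [church i, thetaHalf, thetaHalf, pairY N, church 0,
                  Larg (Bterm D star i) star (church (code t0))]) := betaStar_appList _ hKs
            have s2 : BetaStar (appList (app (app Kstar (church i)) thetaHalf)
                [thetaHalf, pairY N, church 0, Larg (Bterm D star i) star (church (code t0))])
                (appList thetaHalf [thetaHalf, pairY N, church 0,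
                  Larg (Bterm D star i) star (church (code t0))]) :=
              betaStar_appList _ (Kstar_eats (church i) thetaHalf)
            exact s1.trans s2
          have hcl : ∀ i : ℕ, Closed (CBN D star (Bterm D star i) i (church (code t0)) N) :=
            fun i => closed_CBN hD hstar (closed_Bterm hD hstar i) hX hN i
          have claim0 := main_claim hN (hL 0) (hL 1) hfirst 0
          exact homega_trans (homega_of_betaStar (hcl 0) (red 0))
            (homega_trans claim0 (homega_symm (homega_of_betaStar (hcl 1) (red 1))))
        have lamEq : HOmega (lam (CB D star (Bterm D star 0) 0 (church (code t0))))
            (lam (CB D star (Bterm D star 1) 1 (church (code t0)))) := by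
          apply homega_lam_ext (closedUnder_CB hD hstar hb0 hX 0)
            (closedUnder_CB hD hstar hb1 hX 1)
          intro N hN
          rw [CB_subst hD hstar hb0 hX hN 0, CB_subst hD hstar hb1 hX hN 1]
          exact main N hN
        have u0 : HOmega (app (Bterm D star 0) (church (code t0)))
            (lam (CB D star (Bterm D star 0) 0 (church (code t0)))) :=
          homega_of_betaStar (closed_app hb0 hX) (Bx_unfold hD hstar hX 0)
        have u1 : HOmega (app (Bterm D star 1) (church (code t0)))
            (lam (CB D star (Bterm D star 1) 1 (church (code t0)))) :=
          homega_of_betaStar (closed_app hb1 hX) (Bx_unfold hD hstar hX 1)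
        exact homega_trans u0 (homega_trans lamEq (homega_symm u1))

end Lam
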